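/- arXiv:2210.09931 — 3 statements merged into one kernel-verified Lean document; each statement's English description precedes it below -/
import Mathlib

section
/- Let z, z₁, …, z_k ∈ ℤ^d with z = z₁ + ⋯ + z_k, and let m := max_{1≤j≤k} ‖z_j‖∞. Then there exists a permutation σ of {1,…,k} such that for every n ∈ {0,…,k} and every i ∈ {1,…,d}: Σ_{j=1}^n z_{σ(j)}(i) ≥ min{z(i), 0} − m·d. -/
open scoped BigOperators

/-- Infinity norm of an integer vector. -/
def vnormInf {d : ℕ} (v : Fin d → ℤ) : ℕ := Finset.univ.sup fun i => (v i).natAbs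

namespace ReorderAux

open Finset

variable {k d : ℕ}

/-- The set of coordinates where `μ` is strictly fractional. -/
noncomputable def Frac (μ : Fin k → ℝ) : Finset (Fin k) :=
  Finset.univ.filter fun j => 0 < μ j ∧ μ j < 1

/-- Constraint predicate for the fractional selection. -/
structure Con (A : Finset (Fin k)) (F : Fin k → Fin d → ℝ) (s : ℝ) (c : Fin d → ℝ)
    (μ : Fin k → ℝ) : Prop where
  nonneg : ∀ j, 0 ≤ μ j
  le_one : ∀ j, μ j ≤ 1
  supp : ∀ j ∉ A, μ j = 0
  hsum : ∑ j, μ j = s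
  hvec : ∀ i, ∑ j, μ j * F j i = c i

lemma exists_kernel_vec (F : Fin k → Fin d → ℝ) (Fr : Finset (Fin k))
    (h : d + 1 < Fr.card) :
    ∃ u : Fin k → ℝ, u ≠ 0 ∧ (∀ j ∉ Fr, u j = 0) ∧ (∑ j, u j = 0) ∧
      ∀ i, ∑ j, u j * F j i = 0 := by
  classical
  let Φ : ({ x // x ∈ Fr } → ℝ) →ₗ[ℝ] ℝ × (Fin d → ℝ) :=
    { toFun := fun ν => (∑ x, ν x, fun i => ∑ x, ν x * F x.1 i)
      map_add' := by
        intro ν₁ ν₂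
        refine Prod.ext ?_ ?_
        · simp [Finset.sum_add_distrib]
        · funext i
          simp [add_mul, Finset.sum_add_distrib]
      map_smul' := by
        intro r ν
        refine Prod.ext ?_ ?_
        · simp [Finset.mul_sum]
        · funext i
          simp [Finset.mul_sum, mul_assoc] }
  have hni : ¬ Function.Injective Φ := by
    intro hinj
    have hle := LinearMap.finrank_le_finrank_of_injective hinj
    rw [Module.finrank_pi, Module.finrank_prod, Module.finrank_self, Module.finrank_pi] at hle
    simp only [Fintype.card_coe, Fintype.card_fin] at hle
    omega
  rw [Function.not_injective_iff] at hni
  obtain ⟨a, b, hab, hne⟩ := hni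
  set ν := a - b with hνdef
  have hν0 : ν ≠ 0 := sub_ne_zero_of_ne hne
  have hΦν : Φ ν = 0 := by rw [map_sub, hab, sub_self]
  set u : Fin k → ℝ := fun j => if hj : j ∈ Fr then ν ⟨j, hj⟩ else 0 with hudef
  have key : ∀ w : Fin k → ℝ, ∑ j, u j * w j = ∑ x ∈ Fr.attach, ν x * w x.1 := by
    intro w
    rw [← Finset.sum_subset (Finset.subset_univ Fr)
      (by intro j _ hj; simp [hudef, dif_neg hj])]
    rw [← Finset.sum_attach Fr (fun j => u j * w j)]
    refine Finset.sum_congr rfl ?_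
    intro x _
    simp [hudef]
  have hfst : ∑ x ∈ Fr.attach, ν x = 0 := by
    have h1 := congrArg Prod.fst hΦν
    simpa [Φ, Finset.univ_eq_attach] using h1
  have hsnd : ∀ i, ∑ x ∈ Fr.attach, ν x * F x.1 i = 0 := by
    intro i
    have h1 := congrFun (congrArg Prod.snd hΦν) i
    simpa [Φ, Finset.univ_eq_attach] using h1
  refine ⟨u, ?_, ?_, ?_, ?_⟩
  · intro h0
    apply hν0
    funext x
    have := congrFun h0 x.1
    simpa [hudef, x.2] using this
  · intro j hj
    simp [hudef, dif_neg hj]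
  · have := key (fun _ => 1)
    simp only [mul_one] at this
    rw [this, hfst]
  · intro i
    rw [key (fun j => F j i)]
    exact hsnd i

/-- One perturbation step: reduce the number of fractional coordinates. -/
lemma perturb {A : Finset (Fin k)} {F : Fin k → Fin d → ℝ} {s : ℝ} {c : Fin d → ℝ}
    {μ₀ : Fin k → ℝ} (h : Con A F s c μ₀) (hbig : d + 1 < (Frac μ₀).card) :
    ∃ μ : Fin k → ℝ, Con A F s c μ ∧ (Frac μ).card < (Frac μ₀).card := by
  classical
  obtain ⟨u, hu0, husupp, husum, huvec⟩ := exists_kernel_vec F (Frac μ₀) hbig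
  have hFrsub : ∀ j, j ∈ Frac μ₀ → 0 < μ₀ j ∧ μ₀ j < 1 := by
    intro j hj; simpa [Frac] using hj
  set J := (Frac μ₀).filter (fun j => u j ≠ 0) with hJdef
  have memJ : ∀ j, u j ≠ 0 → j ∈ J := by
    intro j hju
    have hjF : j ∈ Frac μ₀ := by
      by_contra hc; exact hju (husupp j hc)
    simp [hJdef, hjF, hju]
  have hJF : ∀ j ∈ J, j ∈ Frac μ₀ ∧ u j ≠ 0 := by
    intro j hj
    rw [hJdef, Finset.mem_filter] at hj
    exact ⟨hj.1, hj.2⟩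
  have hJne : J.Nonempty := by
    obtain ⟨x, hx⟩ : ∃ x, u x ≠ 0 := Function.ne_iff.mp hu0
    exact ⟨x, memJ x hx⟩
  set b : Fin k → ℝ := fun j => if 0 < u j then (1 - μ₀ j) / u j else μ₀ j / (-u j)
    with hbdef
  have hbval : ∀ j ∈ J, (0 < u j ∧ μ₀ j + b j * u j = 1) ∨
      (u j < 0 ∧ μ₀ j + b j * u j = 0) := by
    intro j hj
    obtain ⟨hjF, hju⟩ := hJF j hj
    rcases lt_or_gt_of_ne hju with hneg | hpos
    · refine Or.inr ⟨hneg, ?_⟩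
      rw [hbdef]
      simp only [if_neg (by linarith : ¬ 0 < u j)]
      rw [div_mul_eq_mul_div, mul_div_assoc, div_neg, div_self hju]
      ring
    · refine Or.inl ⟨hpos, ?_⟩
      rw [hbdef]
      simp only [if_pos hpos]
      rw [div_mul_eq_mul_div, mul_div_assoc, div_self hju]
      ring
  have hbpos : ∀ j ∈ J, 0 < b j := by
    intro j hj
    obtain ⟨hjF, hju⟩ := hJF j hj
    obtain ⟨h0, h1⟩ := hFrsub j hjF
    rcases hbval j hj with ⟨hpos, heq⟩ | ⟨hneg, heq⟩
    · nlinarith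
    · nlinarith
  set t := J.inf' hJne b with htdef
  have ht0 : 0 < t := by
    rw [htdef]
    exact (Finset.lt_inf'_iff _).mpr hbpos
  have htle : ∀ j ∈ J, t ≤ b j := fun j hj => Finset.inf'_le _ hj
  set μ : Fin k → ℝ := fun j => μ₀ j + t * u j with hμdef
  have hbounds : ∀ j, 0 ≤ μ j ∧ μ j ≤ 1 := by
    intro j
    rcases eq_or_ne (u j) 0 with h0 | h0
    · have : μ j = μ₀ j := by simp [hμdef, h0]
      rw [this]
      exact ⟨h.nonneg j, h.le_one j⟩
    · have hjJ := memJ j h0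
      have htb := htle j hjJ
      obtain ⟨hf0, hf1⟩ := hFrsub j (hJF j hjJ).1
      have hμj : μ j = μ₀ j + t * u j := rfl
      rcases hbval j hjJ with ⟨hpos, heq⟩ | ⟨hneg, heq⟩
      · constructor
        · nlinarith
        · have h2 : t * u j ≤ b j * u j :=
            mul_le_mul_of_nonneg_right htb hpos.le
          linarith
      · constructor
        · have h2 : b j * u j ≤ t * u j :=
            mul_le_mul_of_nonpos_right htb hneg.le
          linarith
        · nlinarith
  have hsupp : ∀ j ∉ A, μ j = 0 := by
    intro j hj
    have hz := h.supp j hj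
    have hjF : j ∉ Frac μ₀ := by simp [Frac, hz]
    have : u j = 0 := husupp j hjF
    simp [hμdef, this, hz]
  have hμsum : ∑ j, μ j = s := by
    simp only [hμdef]
    rw [Finset.sum_add_distrib, h.hsum, ← Finset.mul_sum, husum, mul_zero, add_zero]
  have hμvec : ∀ i, ∑ j, μ j * F j i = c i := by
    intro i
    simp only [hμdef, add_mul]
    rw [Finset.sum_add_distrib, h.hvec i]
    have h2 : ∑ j, t * u j * F j i = t * ∑ j, u j * F j i := by
      rw [Finset.mul_sum]
      exact Finset.sum_congr rfl (fun j _ => by ring)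
    rw [h2, huvec i, mul_zero, add_zero]
  obtain ⟨js, hjsJ, hjseq⟩ := Finset.exists_mem_eq_inf' hJne b
  have hjsF : js ∈ Frac μ₀ := (hJF js hjsJ).1
  have hμjs : μ js = 0 ∨ μ js = 1 := by
    have ht : t = b js := hjseq
    rcases hbval js hjsJ with ⟨hpos, heq⟩ | ⟨hneg, heq⟩
    · right
      simp only [hμdef]
      rw [ht]
      linarith
    · left
      simp only [hμdef]
      rw [ht]
      linarith
  have hsub : Frac μ ⊆ (Frac μ₀).erase js := by
    intro j hj
    have hjf : 0 < μ j ∧ μ j < 1 := by simpa [Frac] using hj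
    have hjne : j ≠ js := by
      intro hcon
      rw [hcon] at hjf
      rcases hμjs with h1 | h1 <;> rw [h1] at hjf <;> linarith [hjf.1, hjf.2]
    have hjF0 : j ∈ Frac μ₀ := by
      rcases eq_or_ne (u j) 0 with h0 | h0
      · have heq : μ j = μ₀ j := by simp [hμdef, h0]
        rw [heq] at hjf
        simp [Frac, hjf.1, hjf.2]
      · exact (hJF j (memJ j h0)).1
    exact Finset.mem_erase.mpr ⟨hjne, hjF0⟩
  refine ⟨μ, ⟨fun j => (hbounds j).1, fun j => (hbounds j).2, hsupp, hμsum, hμvec⟩, ?_⟩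
  calc (Frac μ).card ≤ ((Frac μ₀).erase js).card := Finset.card_le_card hsub
    _ < (Frac μ₀).card := Finset.card_erase_lt_of_mem hjsF

/-- Lemma A: there is a constrained point with at most `d+1` fractional coordinates. -/
lemma exists_few_fractional {A : Finset (Fin k)} {F : Fin k → Fin d → ℝ} {s : ℝ}
    {c : Fin d → ℝ} {μ₀ : Fin k → ℝ} (h : Con A F s c μ₀) :
    ∃ μ : Fin k → ℝ, Con A F s c μ ∧ (Frac μ).card ≤ d + 1 := by
  classical
  suffices H : ∀ N (μ₁ : Fin k → ℝ), Con A F s c μ₁ → (Frac μ₁).card ≤ N →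
      ∃ μ, Con A F s c μ ∧ (Frac μ).card ≤ d + 1 from
    H (Frac μ₀).card μ₀ h le_rfl
  intro N
  induction N with
  | zero => exact fun μ₁ h1 hc => ⟨μ₁, h1, by omega⟩
  | succ N ih =>
    intro μ₁ h1 hc
    by_cases hle : (Frac μ₁).card ≤ d + 1
    · exact ⟨μ₁, h1, hle⟩
    · obtain ⟨μ, hμ, hlt⟩ := perturb h1 (by omega)
      exact ih μ hμ (by omega)

/-- Invariant carried along the downward recursion. -/
def InvC (F : Fin k → Fin d → ℝ) (Z : Fin d → ℝ) (A : Finset (Fin k)) : Prop :=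
  d ≤ A.card ∧ ∃ lam : Fin k → ℝ,
    Con A F ((A.card - d : ℕ) : ℝ) (fun i => (((A.card - d : ℕ) : ℝ) / k) * Z i) lam

lemma invC_bound {F : Fin k → Fin d → ℝ} {Z : Fin d → ℝ} {M : ℝ} (hM : 0 ≤ M)
    (hF : ∀ j i, -M ≤ F j i) {A : Finset (Fin k)} (h : InvC F Z A) :
    ∀ i, min (Z i) 0 - M * d ≤ ∑ j ∈ A, F j i := by
  classical
  obtain ⟨hdle, lam, hcon⟩ := h
  intro i
  have hAk : A.card ≤ k := by
    simpa using Finset.card_le_univ A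
  have hk0 : 0 < k := by
    rcases Nat.eq_zero_or_pos k with h0 | h0
    · exfalso
      have hd0 : d = 0 := by omega
      have := i.isLt
      omega
    · exact h0
  have hkR : (0:ℝ) < (k:ℝ) := by exact_mod_cast hk0
  have h1 : ∑ j ∈ A, lam j * F j i = (((A.card - d : ℕ):ℝ) / k) * Z i := by
    rw [Finset.sum_subset (Finset.subset_univ A)
      (fun x _ hx => by rw [hcon.supp x hx, zero_mul])]
    exact hcon.hvec i
  have h2 : ∑ j ∈ A, lam j = ((A.card - d : ℕ):ℝ) := by
    rw [Finset.sum_subset (Finset.subset_univ A) (fun x _ hx => hcon.supp x hx)]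
    exact hcon.hsum
  have h3 : ∑ j ∈ A, F j i
      = ∑ j ∈ A, (1 - lam j) * F j i + ∑ j ∈ A, lam j * F j i := by
    rw [← Finset.sum_add_distrib]
    exact Finset.sum_congr rfl (fun j _ => by ring)
  have h4 : ∑ j ∈ A, (1 - lam j) * (-M) ≤ ∑ j ∈ A, (1 - lam j) * F j i := by
    refine Finset.sum_le_sum (fun j _ => ?_)
    exact mul_le_mul_of_nonneg_left (hF j i) (by linarith [hcon.le_one j])
  have h5 : ∑ j ∈ A, (1 - lam j) * (-M) = -(M * d) := by
    rw [← Finset.sum_mul, Finset.sum_sub_distrib, h2, Finset.sum_const, nsmul_eq_mul,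
      mul_one, Nat.cast_sub hdle]
    ring
  have h6 : min (Z i) 0 ≤ (((A.card - d : ℕ):ℝ) / k) * Z i := by
    have hsk : (0:ℝ) ≤ ((A.card - d : ℕ):ℝ) := Nat.cast_nonneg _
    rcases le_or_gt 0 (Z i) with hz | hz
    · calc min (Z i) 0 ≤ 0 := min_le_right _ _
        _ ≤ _ := mul_nonneg (div_nonneg hsk hkR.le) hz
    · have hc1 : ((A.card - d : ℕ):ℝ) / k ≤ 1 := by
        rw [div_le_one hkR]
        exact_mod_cast Nat.le_trans (Nat.sub_le _ _) hAk
      have := mul_le_mul_of_nonpos_right hc1 hz.le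
      calc min (Z i) 0 ≤ Z i := min_le_left _ _
        _ = 1 * Z i := (one_mul _).symm
        _ ≤ _ := this
  linarith

lemma invC_drop {F : Fin k → Fin d → ℝ} {Z : Fin d → ℝ} {A : Finset (Fin k)}
    (hcard : d < A.card) (h : InvC F Z A) :
    ∃ j ∈ A, InvC F Z (A.erase j) := by
  classical
  obtain ⟨hdle, lam, hcon⟩ := h
  have hk0 : 0 < k := by
    rcases Nat.eq_zero_or_pos k with h0 | h0
    · exfalso
      have := Finset.card_le_univ A
      simp at this
      omega
    · exact h0
  have hkR : ((k:ℝ)) ≠ 0 := by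
    have : (0:ℝ) < (k:ℝ) := by exact_mod_cast hk0
    linarith
  have hnd : ((A.card - d : ℕ):ℝ) ≠ 0 := Nat.cast_ne_zero.mpr (by omega)
  set r : ℝ := ((A.card - 1 - d : ℕ) : ℝ) / ((A.card - d : ℕ) : ℝ) with hr
  have hr0 : 0 ≤ r := div_nonneg (Nat.cast_nonneg _) (Nat.cast_nonneg _)
  have hr1 : r ≤ 1 := by
    rw [hr, div_le_one (lt_of_le_of_ne (Nat.cast_nonneg _) (Ne.symm hnd))]
    exact Nat.cast_le.mpr (by omega)
  have hcon0 : Con A F ((A.card - 1 - d : ℕ) : ℝ)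
      (fun i => (((A.card - 1 - d : ℕ):ℝ) / k) * Z i) (fun j => r * lam j) := by
    refine ⟨fun j => mul_nonneg hr0 (hcon.nonneg j), fun j => ?_, fun j hj => ?_, ?_, ?_⟩
    · calc r * lam j ≤ 1 * 1 := mul_le_mul hr1 (hcon.le_one j) (hcon.nonneg j) zero_le_one
        _ = 1 := one_mul 1
    · rw [hcon.supp j hj, mul_zero]
    · rw [← Finset.mul_sum, hcon.hsum, hr, div_mul_cancel₀ _ hnd]
    · intro i
      have h2 : ∑ j, r * lam j * F j i = r * ∑ j, lam j * F j i := by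
        rw [Finset.mul_sum]
        exact Finset.sum_congr rfl (fun j _ => by ring)
      rw [h2, hcon.hvec i, hr]
      have hb := div_self hnd
      calc (((A.card - 1 - d:ℕ):ℝ) / ((A.card - d:ℕ):ℝ))
            * ((((A.card - d:ℕ):ℝ)/k) * Z i)
          = ((((A.card-1-d:ℕ):ℝ)/k) * Z i)
            * (((A.card - d:ℕ):ℝ)/((A.card - d:ℕ):ℝ)) := by ring
        _ = (((A.card-1-d:ℕ):ℝ)/k) * Z i := by rw [hb, mul_one]
  obtain ⟨μ, hμcon, hfrac⟩ := exists_few_fractional hcon0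
  have hzero : ∃ j ∈ A, μ j = 0 := by
    by_contra hno
    push_neg at hno
    have hpos : ∀ j ∈ A, 0 < μ j :=
      fun j hj => lt_of_le_of_ne (hμcon.nonneg j) (Ne.symm (hno j hj))
    set Fr := A.filter (fun j => μ j < 1) with hFrdef
    have hFrsub : Fr ⊆ Frac μ := by
      intro j hj
      rw [hFrdef, Finset.mem_filter] at hj
      simp only [Frac, Finset.mem_filter, Finset.mem_univ, true_and]
      exact ⟨hpos j hj.1, hj.2⟩
    have hFrcard : Fr.card ≤ d + 1 := le_trans (Finset.card_le_card hFrsub) hfrac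
    have hFrA : Fr ⊆ A := Finset.filter_subset _ _
    have hsA : ∑ j ∈ A, μ j = ((A.card - 1 - d : ℕ) : ℝ) := by
      rw [Finset.sum_subset (Finset.subset_univ A) (fun x _ hx => hμcon.supp x hx)]
      exact hμcon.hsum
    have hsplit : ∑ j ∈ A \ Fr, μ j + ∑ j ∈ Fr, μ j = ∑ j ∈ A, μ j :=
      Finset.sum_sdiff hFrA
    have hone : ∀ j ∈ A \ Fr, μ j = 1 := by
      intro j hj
      rw [Finset.mem_sdiff] at hj
      obtain ⟨hjA, hjn⟩ := hj
      have h1 : ¬ μ j < 1 := fun hlt => hjn (by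
        rw [hFrdef]
        exact Finset.mem_filter.mpr ⟨hjA, hlt⟩)
      have := hμcon.le_one j
      linarith
    have e1 : ∑ j ∈ A \ Fr, μ j = ((A.card - Fr.card : ℕ) : ℝ) := by
      rw [Finset.sum_congr rfl hone, Finset.sum_const, nsmul_eq_mul, mul_one,
        Finset.card_sdiff_of_subset hFrA]
    have hcFA : Fr.card ≤ A.card := Finset.card_le_card hFrA
    have ecast1 : ((A.card - Fr.card : ℕ) : ℝ) = (A.card : ℝ) - (Fr.card : ℝ) := by
      rw [Nat.cast_sub hcFA]
    have ecast2 : ((A.card - 1 - d : ℕ) : ℝ) = (A.card : ℝ) - 1 - (d : ℝ) := by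
      have : A.card - 1 - d + (1 + d) = A.card := by omega
      have := congrArg (fun x : ℕ => (x : ℝ)) this
      push_cast at this
      linarith
    rcases Fr.eq_empty_or_nonempty with hFe | hFne
    · rw [hFe] at hsplit e1
      simp only [Finset.sum_empty, add_zero, Finset.card_empty] at hsplit e1
      rw [hsplit, hsA] at e1
      rw [ecast2] at e1
      have : ((A.card - 0 : ℕ):ℝ) = (A.card:ℝ) := by norm_num
      rw [this] at e1
      have hdR : (0:ℝ) ≤ (d:ℝ) := Nat.cast_nonneg _
      linarith
    · have hposFr : 0 < ∑ j ∈ Fr, μ j :=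
        Finset.sum_pos (fun j hj => hpos j (hFrA hj)) hFne
      have hcR : ((Fr.card : ℝ)) ≤ (d:ℝ) + 1 := by exact_mod_cast hFrcard
      rw [e1, hsA, ecast1, ecast2] at hsplit
      linarith
  obtain ⟨j, hjA, hj0⟩ := hzero
  have hce : (A.erase j).card = A.card - 1 := Finset.card_erase_of_mem hjA
  refine ⟨j, hjA, ?_, μ, ?_⟩
  · rw [hce]; omega
  · have hnat : (A.erase j).card - d = A.card - 1 - d := by rw [hce]
    refine ⟨hμcon.nonneg, hμcon.le_one, fun j' hj' => ?_, ?_, ?_⟩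
    · rcases eq_or_ne j' j with hej | hej
      · rw [hej]; exact hj0
      · refine hμcon.supp j' (fun hj'A => hj' ?_)
        exact Finset.mem_erase.mpr ⟨hej, hj'A⟩
    · rw [hnat]; exact hμcon.hsum
    · intro i
      rw [hnat]
      exact hμcon.hvec i

lemma list_sum_lb {M : ℝ} (hM : 0 ≤ M) :
    ∀ l : List ℝ, (∀ x ∈ l, -M ≤ x) → -((l.length : ℝ) * M) ≤ l.sum := by
  intro l
  induction l with
  | nil => simp
  | cons x xs ih =>
    intro hx
    simp only [List.length_cons, List.sum_cons]
    have h1 := hx x (by simp)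
    have h2 := ih (fun y hy => hx y (by simp [hy]))
    push_cast
    linarith

/-- Main recursive construction of a good enumeration. -/
lemma exists_good_list {F : Fin k → Fin d → ℝ} {Z : Fin d → ℝ} {M : ℝ} (hM : 0 ≤ M)
    (hF : ∀ j i, -M ≤ F j i) :
    ∀ n (A : Finset (Fin k)), A.card = n → (A.card ≤ d ∨ InvC F Z A) →
    ∃ l : List (Fin k), l.Nodup ∧ l.toFinset = A ∧
      ∀ q i, min (Z i) 0 - M * d ≤ ((l.take q).map (fun x => F x i)).sum := by
  classical
  intro n
  induction n using Nat.strong_induction_on with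
  | _ n ih =>
    intro A hcard hbranch
    by_cases hle : A.card ≤ d
    · refine ⟨A.toList, Finset.nodup_toList A, Finset.toList_toFinset A, ?_⟩
      intro q i
      have hlb := list_sum_lb hM ((A.toList.take q).map (fun x => F x i))
        (fun x hx => by
          obtain ⟨y, _, rfl⟩ := List.mem_map.mp hx
          exact hF y i)
      have hlen : (((A.toList.take q).map (fun x => F x i)).length) ≤ d := by
        rw [List.length_map, List.length_take]
        have h2 : A.toList.length = A.card := Finset.length_toList A
        omega
      have hminle : min (Z i) 0 ≤ 0 := min_le_right _ _
      have hlenR : ((((A.toList.take q).map (fun x => F x i)).length : ℕ) : ℝ)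
          ≤ (d : ℝ) := Nat.cast_le.mpr hlen
      have := mul_le_mul_of_nonneg_right hlenR hM
      linarith
    · have hInv : InvC F Z A := hbranch.resolve_left hle
      have hdlt : d < A.card := by omega
      obtain ⟨j, hjA, hInv'⟩ := invC_drop hdlt hInv
      have hce : (A.erase j).card = n - 1 := by
        rw [Finset.card_erase_of_mem hjA, hcard]
      obtain ⟨l, hnd, htf, hbd⟩ :=
        ih (n - 1) (by omega) (A.erase j) hce (Or.inr hInv')
      have hjl : j ∉ l := by
        rw [← List.mem_toFinset, htf]
        exact Finset.notMem_erase j A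
      have hnd' : (l ++ [j]).Nodup := by
        rw [List.nodup_append]
        refine ⟨hnd, List.nodup_singleton j, ?_⟩
        intro a ha b hb
        rw [List.mem_singleton] at hb
        subst hb
        rintro rfl; exact hjl ha
      have htf' : (l ++ [j]).toFinset = A := by
        ext a
        rw [List.mem_toFinset, List.mem_append, List.mem_singleton,
          ← List.mem_toFinset, htf, Finset.mem_erase]
        constructor
        · rintro (⟨_, h⟩ | rfl)
          · exact h
          · exact hjA
        · intro ha
          rcases eq_or_ne a j with rfl | hne
          · exact Or.inr rfl
          · exact Or.inl ⟨hne, ha⟩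
      refine ⟨l ++ [j], hnd', htf', ?_⟩
      intro q i
      by_cases hq : q ≤ l.length
      · rw [List.take_append_of_le_length hq]
        exact hbd q i
      · have hlen2 : (l ++ [j]).length ≤ q := by
          rw [List.length_append, List.length_singleton]
          have h3 : l.length = (A.erase j).card := (List.toFinset_card_of_nodup hnd).symm ▸ (htf ▸ rfl)
          omega
        rw [List.take_of_length_le hlen2]
        have hsum : ((l ++ [j]).map (fun x => F x i)).sum = ∑ j' ∈ A, F j' i := by
          have h2 := List.sum_toFinset (fun x => F x i) hnd'
          rw [htf'] at h2
          exact h2.symm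
        rw [hsum]
        exact invC_bound hM hF hInv i

lemma filter_sum_take {α : Type*} {l : List α} (hnd : l.Nodup) (hlen : l.length = k)
    (h : α → ℝ) : ∀ n ≤ k,
    ∑ j ∈ Finset.univ.filter (fun j : Fin k => (j : ℕ) < n),
      h (l.get (Fin.cast hlen.symm j)) = ((l.take n).map h).sum := by
  intro n
  induction n with
  | zero =>
    intro _
    simp
  | succ n ihn =>
    intro hn1
    have hnk : n < k := by omega
    have hnl : n < l.length := by omega
    have hfil : Finset.univ.filter (fun j : Fin k => (j : ℕ) < n + 1)
        = insert (⟨n, hnk⟩ : Fin k)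
            (Finset.univ.filter (fun j : Fin k => (j : ℕ) < n)) := by
      ext a
      simp only [Finset.mem_filter, Finset.mem_insert, Finset.mem_univ, true_and,
        Fin.ext_iff]
      omega
    have hnotmem : (⟨n, hnk⟩ : Fin k)
        ∉ Finset.univ.filter (fun j : Fin k => (j : ℕ) < n) := by simp
    rw [hfil, Finset.sum_insert hnotmem, ihn (by omega), List.take_succ,
      List.getElem?_eq_getElem hnl]
    simp only [Option.toList_some, List.map_append, List.sum_append, List.map_cons,
      List.map_nil, List.sum_cons, List.sum_nil, add_zero]
    rw [add_comm]
    rfl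

lemma invC_univ {F : Fin k → Fin d → ℝ} {Z : Fin d → ℝ} (hdk : d < k)
    (hZ : ∀ i, ∑ j, F j i = Z i) : InvC F Z Finset.univ := by
  classical
  have hcu : (Finset.univ : Finset (Fin k)).card = k := by simp
  have hkR : ((k:ℝ)) ≠ 0 := Nat.cast_ne_zero.mpr (by omega)
  unfold InvC
  rw [hcu]
  refine ⟨by omega, fun _ => ((k - d : ℕ):ℝ) / (k:ℝ), ?_, ?_, ?_, ?_, ?_⟩
  · intro j
    exact div_nonneg (Nat.cast_nonneg _) (Nat.cast_nonneg _)
  · intro j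
    rw [div_le_one (lt_of_le_of_ne (Nat.cast_nonneg _) (Ne.symm hkR))]
    exact Nat.cast_le.mpr (Nat.sub_le _ _)
  · intro j hj
    exact absurd (Finset.mem_univ j) hj
  · rw [Finset.sum_const, Finset.card_univ, Fintype.card_fin, nsmul_eq_mul]
    rw [mul_div_assoc', mul_comm, ← mul_div_assoc', div_self hkR, mul_one]
  · intro i
    rw [← Finset.mul_sum, hZ i]

end ReorderAux

theorem reordering_partial_sums {d k : ℕ} (z : Fin d → ℤ) (f : Fin k → Fin d → ℤ)
    (hz : z = ∑ j, f j) :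
    ∃ σ : Equiv.Perm (Fin k), ∀ n ≤ k, ∀ i : Fin d,
      min (z i) 0 - ((Finset.univ.sup fun j => vnormInf (f j) : ℕ) : ℤ) * d ≤
        ∑ j ∈ Finset.univ.filter (fun j : Fin k => (j : ℕ) < n), f (σ j) i := by
  classical
  set m : ℕ := Finset.univ.sup fun j => vnormInf (f j) with hm
  have hM : (0:ℝ) ≤ (m : ℝ) := Nat.cast_nonneg m
  have habs : ∀ j i, (f j i).natAbs ≤ m := by
    intro j i
    calc (f j i).natAbs ≤ vnormInf (f j) :=
          Finset.le_sup (f := fun i' => ((f j) i').natAbs) (Finset.mem_univ i)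
      _ ≤ m := by
          rw [hm]
          exact Finset.le_sup (f := fun j' => vnormInf (f j')) (Finset.mem_univ j)
  have hF : ∀ (j : Fin k) (i : Fin d), -((m:ℝ)) ≤ ((f j i : ℤ) : ℝ) := by
    intro j i
    have h2 : (f j i).natAbs ≤ m := habs j i
    have h1 : -(m : ℤ) ≤ f j i := by omega
    exact_mod_cast h1
  have hZ : ∀ i, ∑ j, ((f j i : ℤ) : ℝ) = ((z i : ℤ) : ℝ) := by
    intro i
    have h1 : z i = ∑ j, f j i := by
      rw [hz]
      exact Finset.sum_apply i Finset.univ f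
    rw [h1]
    push_cast
    rfl
  have hbranch : (Finset.univ : Finset (Fin k)).card ≤ d ∨
      ReorderAux.InvC (fun j i => ((f j i : ℤ) : ℝ)) (fun i => ((z i : ℤ) : ℝ))
        Finset.univ := by
    rcases le_or_gt k d with hkd | hdk
    · left
      simpa using hkd
    · exact Or.inr (ReorderAux.invC_univ hdk hZ)
  obtain ⟨l, hnd, htf, hbd⟩ := ReorderAux.exists_good_list (Z := fun i => ((z i : ℤ) : ℝ)) hM hF
    (Finset.univ.card) Finset.univ rfl hbranch
  have hlen : l.length = k := by
    rw [← List.toFinset_card_of_nodup hnd, htf]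
    simp
  have hginj : Function.Injective (fun p : Fin k => l.get (Fin.cast hlen.symm p)) :=
    (List.nodup_iff_injective_get.mp hnd).comp (fun a b hab => by
      simpa [Fin.ext_iff] using hab)
  refine ⟨Equiv.ofBijective _ ((Finite.injective_iff_bijective).mp hginj), ?_⟩
  intro n hn i
  have hreal := hbd n i
  have hsum := ReorderAux.filter_sum_take hnd hlen (fun x => ((f x i : ℤ) : ℝ)) n hn
  rw [← hsum] at hreal
  rw [← @Int.cast_le ℝ]
  push_cast
  exact hreal
end

section
/- Let G be a structurally-reversible I-unfolding of a Petri net A. For every cycle θ on a state q of G, there exists a cycle θ' on q such that Δ(θ') = −Δ(θ). -/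
open scoped BigOperators

/-- A configuration is a vector in `ℕ^d`. -/
abbrev Cfg (d : ℕ) := Fin d → ℕ

/-- A Petri net action is a pair of configurations. -/
abbrev PNAction (d : ℕ) := Cfg d × Cfg d

/-- Displacement of an action. -/
def disp {d : ℕ} (a : PNAction d) : Fin d → ℤ :=
  fun i => (a.2 i : ℤ) - (a.1 i : ℤ)

/-- Infinity norm of an action. -/
def anorm {d : ℕ} (a : PNAction d) : ℕ :=
  Finset.univ.sup fun i => max (a.1 i) (a.2 i)

/-- Infinity norm of a Petri net. -/
def netNorm {d : ℕ} (A : Finset (PNAction d)) : ℕ := A.sup anorm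

/-- Step relation of a single action. -/
def Step {d : ℕ} (a : PNAction d) (x y : Cfg d) : Prop :=
  ∃ c : Cfg d, x = a.1 + c ∧ y = a.2 + c

/-- Step relation of a word of actions. -/
def Fires {d : ℕ} : List (PNAction d) → Cfg d → Cfg d → Prop
  | [], x, y => x = y
  | a :: σ, x, y => ∃ z, Step a x z ∧ Fires σ z y

/-- Displacement of a word of actions. -/
def wdisp {d : ℕ} (σ : List (PNAction d)) : Fin d → ℤ :=
  (σ.map disp).sum

/-- Reachability relation of a Petri net. -/
def Reach {d : ℕ} (A : Finset (PNAction d)) (x y : Cfg d) : Prop :=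
  ∃ σ : List (PNAction d), (∀ a ∈ σ, a ∈ A) ∧ Fires σ x y

/-- Mutual reachability. -/
def MutualReach {d : ℕ} (A : Finset (PNAction d)) (x y : Cfg d) : Prop :=
  Reach A x y ∧ Reach A y x

/-- A strongly connected component of configurations: an equivalence class of mutual
reachability. -/
def IsSCCC {d : ℕ} (A : Finset (PNAction d)) (C : Set (Cfg d)) : Prop :=
  ∃ c₀ : Cfg d, C = {x | MutualReach A c₀ x}

/-- An `I`-configuration. -/
abbrev ICfg (d : ℕ) (I : Finset (Fin d)) := {i : Fin d // i ∈ I} → ℕ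

/-- Restriction of a configuration to the components in `I`. -/
def restrictC {d : ℕ} (I : Finset (Fin d)) (c : Cfg d) : ICfg d I := fun i => c i.1

/-- Step relation of an action on `I`-configurations. -/
def IStep {d : ℕ} {I : Finset (Fin d)} (a : PNAction d) (p q : ICfg d I) : Prop :=
  ∃ c : ICfg d I, p = restrictC I a.1 + c ∧ q = restrictC I a.2 + c

/-- A transition of an `I`-unfolding. -/
abbrev UTrans (d : ℕ) (I : Finset (Fin d)) := ICfg d I × PNAction d × ICfg d I

/-- Path from `p` to `q` in a transition set. -/
def IsPath {d : ℕ} {I : Finset (Fin d)} (T : Finset (UTrans d I)) :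
    List (UTrans d I) → ICfg d I → ICfg d I → Prop
  | [], p, q => p = q
  | t :: π, p, q => t ∈ T ∧ t.1 = p ∧ IsPath T π t.2.2 q

/-- Label of a path. -/
def plabel {d : ℕ} {I : Finset (Fin d)} (π : List (UTrans d I)) : List (PNAction d) :=
  π.map fun t => t.2.1

/-- Displacement of a path. -/
def pdisp {d : ℕ} {I : Finset (Fin d)} (π : List (UTrans d I)) : Fin d → ℤ :=
  wdisp (plabel π)

/-- An `I`-unfolding of a Petri net `A`. -/
structure Unfolding (d : ℕ) (I : Finset (Fin d)) (A : Finset (PNAction d)) where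
  Q : Finset (ICfg d I)
  T : Finset (UTrans d I)
  Q_nonempty : Q.Nonempty
  T_mem : ∀ t ∈ T, t.1 ∈ Q ∧ t.2.1 ∈ A ∧ t.2.2 ∈ Q
  T_step : ∀ t ∈ T, IStep t.2.1 t.1 t.2.2
  connected : ∀ p ∈ Q, ∀ q ∈ Q, ∃ π, IsPath T π p q

/-- Structural reversibility. -/
def StructRev {d : ℕ} {I : Finset (Fin d)} {A : Finset (PNAction d)}
    (G : Unfolding d I A) : Prop :=
  ∀ t ∈ G.T, ∃ π, IsPath G.T π t.2.2 t.1 ∧ wdisp (plabel (t :: π)) = 0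

/-- Simple cycle on a state `q`. -/
def SimpleCycle {d : ℕ} {I : Finset (Fin d)} (T : Finset (UTrans d I))
    (π : List (UTrans d I)) (q : ICfg d I) : Prop :=
  IsPath T π q q ∧ π ≠ [] ∧ (π.map fun t => t.2.2).Nodup

/-- The lattice spanned by the displacements of the simple cycles of `G`. -/
def LG {d : ℕ} {I : Finset (Fin d)} {A : Finset (PNAction d)}
    (G : Unfolding d I A) : AddSubgroup (Fin d → ℤ) :=
  AddSubgroup.closure {v | ∃ q ∈ G.Q, ∃ π, SimpleCycle G.T π q ∧ pdisp π = v}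

/-- The coset `Δ(π) + L_G` for paths `π` from `p` to `q`. -/
def LpGq {d : ℕ} {I : Finset (Fin d)} {A : Finset (PNAction d)}
    (G : Unfolding d I A) (p q : ICfg d I) : Set (Fin d → ℤ) :=
  {v | ∃ π, IsPath G.T π p q ∧ v - pdisp π ∈ LG G}

/-- The bound `b := (3dm)^((d+2)^(2d+1))`. -/
def bVal (d m : ℕ) : ℕ := (3 * d * m) ^ ((d + 2) ^ (2 * d + 1))

/-- The threshold `m·r³·(3drm)^d`. -/
def thrVal (d m r : ℕ) : ℕ := m * r ^ 3 * (3 * d * r * m) ^ d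

/-- A pumping pair for `(q, G)`: a pair of words labeling cycles on `q` of length at
most `d·b^d`. -/
def PumpingPair {d : ℕ} {I : Finset (Fin d)} {A : Finset (PNAction d)}
    (G : Unfolding d I A) (q : ICfg d I) (u v : List (PNAction d)) : Prop :=
  (∃ α, IsPath G.T α q q ∧ plabel α = u ∧ α.length ≤ d * (bVal d (netNorm A)) ^ d) ∧
  (∃ β, IsPath G.T β q q ∧ plabel β = v ∧ β.length ≤ d * (bVal d (netNorm A)) ^ d)

/-- The upward-closed set `U_{q,G}`. -/
def UqG {d : ℕ} {I : Finset (Fin d)} {A : Finset (PNAction d)}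
    (G : Unfolding d I A) (q : ICfg d I) : Set (Cfg d) :=
  {c | q ≤ restrictC I c ∧ ∃ u v, PumpingPair G q u v ∧
    ∃ cm cp : Cfg d, Fires u cm c ∧ Fires v c cp ∧
      ∀ i : Fin d, i ∉ I →
        thrVal d (netNorm A) G.Q.card ≤ cm i ∧ thrVal d (netNorm A) G.Q.card ≤ cp i}

section Paths

variable {d : ℕ} {I : Finset (Fin d)}

@[simp]
lemma pdisp_nil : pdisp ([] : List (UTrans d I)) = 0 := by
  simp [pdisp, plabel, wdisp]

lemma pdisp_cons (t : UTrans d I) (π : List (UTrans d I)) :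
    pdisp (t :: π) = disp t.2.1 + pdisp π := by
  simp [pdisp, plabel, wdisp]

lemma pdisp_append (π₁ π₂ : List (UTrans d I)) :
    pdisp (π₁ ++ π₂) = pdisp π₁ + pdisp π₂ := by
  simp [pdisp, plabel, wdisp]

lemma IsPath.append {T : Finset (UTrans d I)} {π₁ π₂ : List (UTrans d I)} {p q r : ICfg d I}
    (h₁ : IsPath T π₁ p q) (h₂ : IsPath T π₂ q r) : IsPath T (π₁ ++ π₂) p r := by
  induction π₁ generalizing p with
  | nil => exact (h₁ : p = q) ▸ h₂
  | cons t π ih =>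
    obtain ⟨ht, rfl, htail⟩ := h₁
    exact ⟨ht, rfl, ih htail⟩

end Paths

namespace StructRev

variable {d : ℕ} {I : Finset (Fin d)} {A : Finset (PNAction d)} {G : Unfolding d I A}

lemma exists_path_undo_trans (hrev : StructRev G) {t : UTrans d I} (ht : t ∈ G.T) :
    ∃ π, IsPath G.T π t.2.2 t.1 ∧ pdisp π = -disp t.2.1 := by
  obtain ⟨π, hπ, hzero⟩ := hrev t ht
  refine ⟨π, hπ, eq_neg_of_add_eq_zero_right ?_⟩
  rwa [← pdisp_cons]

lemma exists_reverse_path (hrev : StructRev G) {π : List (UTrans d I)} {p q : ICfg d I}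
    (hπ : IsPath G.T π p q) : ∃ π', IsPath G.T π' q p ∧ pdisp π' = -pdisp π := by
  induction π generalizing p with
  | nil => exact ⟨[], (hπ : p = q).symm, by simp⟩
  | cons t π ih =>
    obtain ⟨ht, rfl, htail⟩ := hπ
    obtain ⟨σ, hσ, hσdisp⟩ := ih htail
    obtain ⟨τ, hτ, hτdisp⟩ := hrev.exists_path_undo_trans ht
    refine ⟨σ ++ τ, hσ.append hτ, ?_⟩
    rw [pdisp_append, pdisp_cons, hσdisp, hτdisp, neg_add, add_comm]

end StructRev

theorem cycle_displacement_negation_general {d : ℕ} {I : Finset (Fin d)}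
    {A : Finset (PNAction d)} (G : Unfolding d I A) (hrev : StructRev G)
    (q : ICfg d I) (θ : List (UTrans d I))
    (hθ : IsPath G.T θ q q) :
    ∃ θ' : List (UTrans d I), IsPath G.T θ' q q ∧ pdisp θ' = -pdisp θ :=
  hrev.exists_reverse_path hθ

/-- In a structurally-reversible `I`-unfolding, for every cycle
`θ` on a state `q` there exists a cycle `θ'` on `q` with `Δ(θ') = −Δ(θ)`. -/
theorem cycle_displacement_negation {d : ℕ} {I : Finset (Fin d)}
    {A : Finset (PNAction d)} (G : Unfolding d I A) (hrev : StructRev G)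
    (q : ICfg d I) (hq : q ∈ G.Q) (θ : List (UTrans d I))
    (hθ : IsPath G.T θ q q) :
    ∃ θ' : List (UTrans d I), IsPath G.T θ' q q ∧ pdisp θ' = -pdisp θ :=
  cycle_displacement_negation_general G hrev q θ hθ
end

section
/- Let m ≥ 1, let λ be an m-adapted d-dimensional extractor, let A be a Petri net with A ⊆ {0,…,m}^d × ℕ^d, and let e = c₀c₁…c_k be an execution of A. Let I := extract_{λ,{1,…,d}}(e). Then there exists a word σ of actions of A that can be obtained from e by removing I-cycles, with |σ| ≤ d·λ_d^d, such that c₀ →_σ c for some configuration c satisfying c(i) = c_k(i) for every i ∈ I and c(i) ≥ λ_{|I|+1} − m·Σ_{j=1}^{|I|} λ_j^j for every i ∉ I. -/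
open scoped BigOperators

/-- `e` is a `σ`-execution: a nonempty word of configurations consecutively related
by the actions of `σ`. -/
def IsExec {d : ℕ} : List (PNAction d) → List (Cfg d) → Prop
  | [], e => ∃ c, e = [c]
  | a :: σ, e => ∃ c c' e', e = c :: c' :: e' ∧ Step a c c' ∧ IsExec σ (c' :: e')

/-- `e` is an `I`-cyclic execution of the Petri net `A`: an execution of `A` whose
first and last configurations agree on every component of `I`. -/
def IsCyclicExec {d : ℕ} (A : Finset (PNAction d)) (I : Finset (Fin d))
    (e : List (Cfg d)) : Prop :=
  (∃ τ : List (PNAction d), (∀ a ∈ τ, a ∈ A) ∧ IsExec τ e) ∧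
  ∀ c₀ cl : Cfg d, e.head? = some c₀ → e.getLast? = some cl →
    ∀ i ∈ I, c₀ i = cl i

/-- `ObtainedBy A I e σ` : the word `σ` of actions of `A` is obtained from the
execution `e` by removing `I`-cycles, i.e. `e` decomposes as a concatenation
`e₀…e_k` of `I`-cyclic executions with `last(e_{j−1}) →_{a_j} first(e_j)`. -/
inductive ObtainedBy {d : ℕ} (A : Finset (PNAction d)) (I : Finset (Fin d)) :
    List (Cfg d) → List (PNAction d) → Prop
  | nil (e : List (Cfg d)) : IsCyclicExec A I e → ObtainedBy A I e []
  | cons (e₀ : List (Cfg d)) (x y : Cfg d) (e : List (Cfg d)) (a : PNAction d)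
      (σ : List (PNAction d)) :
      IsCyclicExec A I (e₀ ++ [x]) → a ∈ A → Step a x y →
      ObtainedBy A I (y :: e) σ →
      ObtainedBy A I ((e₀ ++ [x]) ++ y :: e) (a :: σ)

/-- A `(λ,I)`-small set of `C`. -/
def SmallSet {d : ℕ} (lam : ℕ → ℕ) (I : Finset (Fin d)) (C : Set (Cfg d))
    (J : Finset (Fin d)) : Prop :=
  J ⊆ I ∧ ∀ c ∈ C, ∀ j ∈ J, c j < lam J.card

/-- `extract_{λ,I}(C)`: the maximal `(λ,I)`-small set of `C` (the union of all
`(λ,I)`-small sets of `C`). -/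
noncomputable def maxSmall {d : ℕ} (lam : ℕ → ℕ) (I : Finset (Fin d))
    (C : Set (Cfg d)) : Finset (Fin d) :=
  (@Finset.filter _ (fun J => SmallSet lam I C J)
    (fun _ => Classical.propDecidable _) Finset.univ).sup id

/-- Extraction along a finite word of configurations: `extract_{λ,I}(ε) = I` and
`extract_{λ,I}(e·c) = extract_{λ,extract_{λ,I}(e)}({c})`. -/
noncomputable def extractWord {d : ℕ} (lam : ℕ → ℕ) (I : Finset (Fin d))
    (e : List (Cfg d)) : Finset (Fin d) :=
  e.foldl (fun J c => maxSmall lam J {c}) I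

namespace Rackoff

open Finset

section lists
variable {α : Type*}

lemma getLast?_cons_eq : ∀ (w : List α) (c : α), (c :: w).getLast? = some (w.getLastD c) := by
  intro w
  induction w with
  | nil => intro c; simp
  | cons h t ih =>
    intro c
    rw [List.getLast?_cons_cons, ih h]
    simp [List.getLastD_eq_getLast?, ih h]

lemma getLastD_cons' (t : List α) (h c : α) : (h :: t).getLastD c = t.getLastD h := by
  rw [List.getLastD_eq_getLast?, getLast?_cons_eq]; simp

lemma lastD_append : ∀ (t : List α) (c₀ c : α) (w : List α),
    (t ++ c :: w).getLastD c₀ = w.getLastD c := by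
  intro t
  induction t with
  | nil => intro c₀ c w; exact getLastD_cons' w c c₀
  | cons h t ih => intro c₀ c w; rw [List.cons_append, getLastD_cons']; exact ih h c w

lemma getLast_cons_eq : ∀ (e : List α) (c₀ : α) (h : c₀ :: e ≠ []),
    (c₀ :: e).getLast h = e.getLastD c₀ := by
  intro e c₀ h
  have := List.getLast?_eq_getLast (l := c₀ :: e) h
  rw [getLast?_cons_eq] at this
  exact Option.some_injective _ this.symm

lemma cons_eq_dropLast_append : ∀ (w : List α) (c : α),
    c :: w = (c :: w).dropLast ++ [w.getLastD c] := by
  intro w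
  induction w with
  | nil => intro c; simp
  | cons h t ih =>
    intro c
    rw [getLastD_cons', List.dropLast_cons₂, List.cons_append]
    exact congrArg (c :: ·) (ih h)

lemma split_prop (Q : α → Prop) : ∀ w : List α,
    (∀ c ∈ w, Q c) ∨ ∃ w₁ c w₂, w = w₁ ++ c :: w₂ ∧ (∀ c' ∈ w₁, Q c') ∧ ¬ Q c := by
  intro w
  induction w with
  | nil => left; simp
  | cons h t ih =>
    by_cases hQ : Q h
    · rcases ih with h1 | ⟨w₁, c, w₂, rfl, hw₁, hc⟩
      · left; intro c hc; rcases List.mem_cons.mp hc with rfl | hc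
        · exact hQ
        · exact h1 c hc
      · right
        refine ⟨h :: w₁, c, w₂, rfl, ?_, hc⟩
        intro c' hc'; rcases List.mem_cons.mp hc' with rfl | hc'
        · exact hQ
        · exact hw₁ c' hc'
    · right; exact ⟨[], h, t, rfl, by simp, hQ⟩

lemma split_exists (Q : α → Prop) (w : List α) :
    (∀ c ∈ w, ¬ Q c) ∨ ∃ w₁ c w₂, w = w₁ ++ c :: w₂ ∧ Q c := by
  rcases split_prop (fun c => ¬ Q c) w with h | ⟨w₁, c, w₂, rfl, _, hc⟩
  · left; exact h
  · right; exact ⟨w₁, c, w₂, rfl, Classical.not_not.mp hc⟩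

end lists

end Rackoff
namespace Rackoff
open Finset

variable {d : ℕ}

lemma fires_append : ∀ {σ₁ : List (PNAction d)} {x y : Cfg d}, Fires σ₁ x y →
    ∀ {σ₂ z}, Fires σ₂ y z → Fires (σ₁ ++ σ₂) x z := by
  intro σ₁
  induction σ₁ with
  | nil => intro x y h σ₂ z h2; have : x = y := h; subst this; exact h2
  | cons a σ ih =>
    intro x y h σ₂ z h2
    obtain ⟨w, hs, hf⟩ := h
    exact ⟨w, hs, ih hf h2⟩

lemma step_int (a : PNAction d) {x y : Cfg d} (h : Step a x y) (i : Fin d) :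
    a.1 i ≤ x i ∧ (y i : ℤ) = (x i : ℤ) - a.1 i + a.2 i := by
  obtain ⟨c, hx, hy⟩ := h
  have hx' : x i = a.1 i + c i := congrFun hx i
  have hy' : y i = a.2 i + c i := congrFun hy i
  constructor
  · omega
  · push_cast [hx', hy']; ring

lemma step_of_le (a : PNAction d) (x : Cfg d) (h : ∀ i, a.1 i ≤ x i) :
    Step a x (fun i => a.2 i + (x i - a.1 i)) := by
  refine ⟨fun i => x i - a.1 i, ?_, rfl⟩
  funext i
  have := h i
  show x i = a.1 i + (x i - a.1 i)
  omega

lemma isExec_append : ∀ {τ : List (PNAction d)} {q : List (Cfg d)} {c : Cfg d},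
    IsExec τ (q ++ [c]) → ∀ {τ' r}, IsExec τ' (c :: r) → IsExec (τ ++ τ') (q ++ c :: r) := by
  intro τ
  induction τ with
  | nil =>
    intro q c h τ' r h2
    obtain ⟨c', hc'⟩ := h
    have hq : q = [] := by
      cases q with
      | nil => rfl
      | cons a b =>
        exfalso
        have := congrArg List.length hc'
        simp at this
    subst hq
    simp at hc'; subst hc'
    simpa using h2
  | cons a τ ih =>
    intro q c h τ' r h2
    obtain ⟨x₁, x₂, e', heq, hstep, hrest⟩ := h
    cases q with
    | nil => simp at heq
    | cons g q' =>
      have hh : g = x₁ := by simpa using congrArg (·.head?) heq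
      have heq2 : q' ++ [c] = x₂ :: e' := by
        have := congrArg List.tail heq; simpa using this
      rw [← heq2] at hrest
      have ihx := ih (q := q') hrest h2
      have hht : ∃ t, q' ++ c :: r = x₂ :: t := by
        cases q' with
        | nil =>
          simp at heq2
          exact ⟨r, by rw [heq2.1]; rfl⟩
        | cons y ys =>
          have : y = x₂ := by simpa using congrArg (·.head?) heq2
          exact ⟨ys ++ c :: r, by rw [this]; rfl⟩
      obtain ⟨t, ht⟩ := hht
      refine ⟨g, x₂, t, by rw [List.cons_append, ht], hh ▸ hstep, ?_⟩
      rw [← ht]; exact ihx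

lemma isExec_split : ∀ (l₁ : List (Cfg d)), l₁ ≠ [] → ∀ {σ : List (PNAction d)}
    {c : Cfg d} {l₂ : List (Cfg d)}, IsExec σ (l₁ ++ c :: l₂) →
    ∃ q x τ₁ a τ₂, l₁ = q ++ [x] ∧ σ = τ₁ ++ a :: τ₂ ∧ IsExec τ₁ l₁ ∧ Step a x c ∧
      IsExec τ₂ (c :: l₂) := by
  intro l₁
  induction l₁ with
  | nil => intro h; exact absurd rfl h
  | cons g t ih =>
    intro _ σ c l₂ hex
    cases σ with
    | nil =>
      obtain ⟨c', hc'⟩ := hex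
      exfalso
      have := congrArg List.length hc'
      simp at this
    | cons a τ =>
      obtain ⟨x₁, x₂, e', heq, hstep, hrest⟩ := hex
      have hh : g = x₁ := by simpa using congrArg (·.head?) heq
      have heq2 : t ++ c :: l₂ = x₂ :: e' := by
        have := congrArg List.tail heq; simpa using this
      cases t with
      | nil =>
        simp at heq2
        obtain ⟨h1, h2⟩ := heq2
        refine ⟨[], g, [], a, τ, rfl, rfl, ⟨g, rfl⟩, ?_, ?_⟩
        · rw [hh, h1]; exact hstep
        · rw [← h1, ← h2] at hrest; exact hrest
      | cons h' t' =>
        have hh' : h' = x₂ := by simpa using congrArg (·.head?) heq2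
        have heq3 : t' ++ c :: l₂ = e' := by
          have := congrArg List.tail heq2; simpa using this
        rw [← heq3, ← hh'] at hrest
        obtain ⟨q, x, τ₁, a', τ₂, hl, hσ, hex1, hst, hex2⟩ := ih (by simp) hrest
        refine ⟨g :: q, x, a :: τ₁, a', τ₂, by rw [List.cons_append, ← hl],
          by rw [hσ]; rfl, ?_, hst, hex2⟩
        exact ⟨g, h', t', rfl, hh ▸ hh' ▸ hstep, hl ▸ hex1⟩

end Rackoff
namespace Rackoff
open Finset

variable {d : ℕ} {lam : ℕ → ℕ}

lemma card_le_d (J : Finset (Fin d)) : J.card ≤ d := by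
  have := Finset.card_le_univ J
  simpa using this

lemma smallSet_maxSmall (hmono : ∀ i j : ℕ, i ≤ j → j ≤ d + 1 → lam i ≤ lam j)
    (I : Finset (Fin d)) (C : Set (Cfg d)) : SmallSet lam I C (maxSmall lam I C) := by
  classical
  apply Finset.sup_induction
  · exact ⟨Finset.empty_subset I, by simp⟩
  · rintro J₁ ⟨hs₁, hb₁⟩ J₂ ⟨hs₂, hb₂⟩
    refine ⟨Finset.union_subset hs₁ hs₂, ?_⟩
    intro c hc j hj
    have hcard : (J₁ ∪ J₂).card ≤ d + 1 := (card_le_d _).trans (Nat.le_succ d)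
    rcases Finset.mem_union.mp hj with hj | hj
    · exact lt_of_lt_of_le (hb₁ c hc j hj)
        (hmono _ _ (Finset.card_le_card Finset.subset_union_left) hcard)
    · exact lt_of_lt_of_le (hb₂ c hc j hj)
        (hmono _ _ (Finset.card_le_card Finset.subset_union_right) hcard)
  · intro J hJ
    exact (Finset.mem_filter.mp hJ).2

lemma maxSmall_subset (I : Finset (Fin d)) (C : Set (Cfg d)) : maxSmall lam I C ⊆ I := by
  classical
  rw [← Finset.le_iff_subset]
  apply Finset.sup_le
  intro J hJ
  exact Finset.le_iff_subset.mpr (Finset.mem_filter.mp hJ).2.1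

lemma subset_maxSmall {I : Finset (Fin d)} {C : Set (Cfg d)} {J : Finset (Fin d)}
    (h : SmallSet lam I C J) : J ⊆ maxSmall lam I C := by
  classical
  rw [← Finset.le_iff_subset]
  exact Finset.le_sup (f := id) (Finset.mem_filter.mpr ⟨Finset.mem_univ J, h⟩)

lemma maxSmall_eq_self {I : Finset (Fin d)} {C : Set (Cfg d)} (h : SmallSet lam I C I) :
    maxSmall lam I C = I :=
  Finset.Subset.antisymm (maxSmall_subset I C) (subset_maxSmall h)

lemma maxSmall_idem (hmono : ∀ i j : ℕ, i ≤ j → j ≤ d + 1 → lam i ≤ lam j)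
    (I : Finset (Fin d)) (C : Set (Cfg d)) :
    maxSmall lam (maxSmall lam I C) C = maxSmall lam I C := by
  apply maxSmall_eq_self
  exact ⟨Finset.Subset.refl _, (smallSet_maxSmall hmono I C).2⟩

lemma maxSmall_lt {I : Finset (Fin d)} {C : Set (Cfg d)} {c : Cfg d} (hc : c ∈ C)
    (hmono : ∀ i j : ℕ, i ≤ j → j ≤ d + 1 → lam i ≤ lam j)
    {j : Fin d} (hj : j ∈ maxSmall lam I C) : c j < lam (maxSmall lam I C).card :=
  (smallSet_maxSmall hmono I C).2 c hc j hj

lemma drop_large (hmono : ∀ i j : ℕ, i ≤ j → j ≤ d + 1 → lam i ≤ lam j)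
    {I : Finset (Fin d)} {c : Cfg d} {i : Fin d} (hi : i ∈ I)
    (hni : i ∉ maxSmall lam I {c}) :
    lam ((maxSmall lam I {c}).card + 1) ≤ c i := by
  by_contra hlt
  push_neg at hlt
  have hsmall : SmallSet lam I ({c} : Set (Cfg d)) (insert i (maxSmall lam I {c})) := by
    constructor
    · exact Finset.insert_subset hi (maxSmall_subset I {c})
    · intro c' hc' j hj
      have hc'' : c' = c := hc'
      subst hc''
      have hcard : (insert i (maxSmall lam I {c'})).card = (maxSmall lam I {c'}).card + 1 :=
        Finset.card_insert_of_notMem hni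
      rcases Finset.mem_insert.mp hj with rfl | hj
      · rw [hcard]; exact hlt
      · calc c' j < lam (maxSmall lam I {c'}).card :=
              (smallSet_maxSmall hmono I {c'}).2 c' rfl j hj
          _ ≤ lam (insert i (maxSmall lam I {c'})).card := by
              rw [hcard]
              exact hmono _ _ (Nat.le_succ _) (by have := card_le_d (maxSmall lam I {c'}); omega)
  exact hni (subset_maxSmall hsmall (Finset.mem_insert_self i _))

lemma extractWord_nil (I : Finset (Fin d)) : extractWord lam I [] = I := rfl

lemma extractWord_cons (I : Finset (Fin d)) (c : Cfg d) (e : List (Cfg d)) :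
    extractWord lam I (c :: e) = extractWord lam (maxSmall lam I {c}) e := rfl

lemma extractWord_append (I : Finset (Fin d)) (l₁ l₂ : List (Cfg d)) :
    extractWord lam I (l₁ ++ l₂) = extractWord lam (extractWord lam I l₁) l₂ :=
  List.foldl_append

lemma extractWord_subset (e : List (Cfg d)) : ∀ I, extractWord lam I e ⊆ I := by
  induction e with
  | nil => intro I; exact Finset.Subset.refl _
  | cons c t ih =>
    intro I
    rw [extractWord_cons]
    exact (ih _).trans (maxSmall_subset _ _)

lemma extractWord_pure {J : Finset (Fin d)} : ∀ {w : List (Cfg d)},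
    (∀ c ∈ w, maxSmall lam J {c} = J) → extractWord lam J w = J := by
  intro w
  induction w with
  | nil => intro _; rfl
  | cons c t ih =>
    intro h
    rw [extractWord_cons, h c (by simp)]
    exact ih (fun c' hc' => h c' (by simp [hc']))

/-- projection onto a coordinate set -/
def projF (J : Finset (Fin d)) (c : Cfg d) : Cfg d := fun i => if i ∈ J then c i else 0

lemma projF_eq_iff {J : Finset (Fin d)} {c c' : Cfg d} :
    projF J c = projF J c' ↔ ∀ i ∈ J, c i = c' i := by
  constructor
  · intro h i hi
    have := congrFun h i
    simpa [projF, hi] using this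
  · intro h
    funext i
    by_cases hi : i ∈ J <;> simp [projF, hi]
    exact h i hi

lemma card_le_pow {J : Finset (Fin d)} {B : ℕ} (hB : 0 < B) (S : Finset (Cfg d))
    (hS : ∀ p ∈ S, (∀ i ∈ J, p i < B) ∧ ∀ i, i ∉ J → p i = 0) :
    S.card ≤ B ^ J.card := by
  classical
  have h := Finset.card_le_card_of_injOn
    (f := fun (p : Cfg d) (j : {x // x ∈ J}) => (⟨p j.1 % B, Nat.mod_lt _ hB⟩ : Fin B))
    (s := S) (t := Finset.univ) (fun p _ => Finset.mem_univ _) ?_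
  · calc S.card ≤ (Finset.univ : Finset ({x // x ∈ J} → Fin B)).card := h
      _ = B ^ J.card := by
          rw [Finset.card_univ]
          rw [Fintype.card_fun]
          simp [Fintype.card_coe]
  · intro p hp p' hp' hfe
    funext i
    by_cases hi : i ∈ J
    · have := congrFun hfe ⟨i, hi⟩
      have h1 : p i % B = p' i % B := congrArg Fin.val this
      rw [Nat.mod_eq_of_lt ((hS p hp).1 i hi), Nat.mod_eq_of_lt ((hS p' hp').1 i hi)] at h1
      exact h1
    · rw [(hS p hp).2 i hi, (hS p' hp').2 i hi]

end Rackoff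
namespace Rackoff
open Finset

variable {d : ℕ} {lam : ℕ → ℕ} {m : ℕ}

lemma sum_Icc_bot {f : ℕ → ℕ} {a b : ℕ} (h : a ≤ b) :
    ∑ j ∈ Finset.Icc a b, f j = f a + ∑ j ∈ Finset.Icc (a + 1) b, f j := by
  rw [Finset.Icc_add_one_left_eq_Ioc, ← Finset.Icc_erase_left,
    Finset.add_sum_erase _ f (Finset.mem_Icc.mpr ⟨le_refl a, h⟩)]

lemma telescope (hadapted : ∀ n ≤ d, lam n + m * lam n ^ n ≤ lam (n + 1)) :
    ∀ b ≤ d, ∀ a ≤ b + 1, lam a + m * ∑ j ∈ Finset.Icc a b, lam j ^ j ≤ lam (b + 1) := by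
  intro b
  induction b with
  | zero =>
    intro _ a ha
    interval_cases a
    · simpa using hadapted 0 (Nat.zero_le d)
    · simp
  | succ b ih =>
    intro hb a ha
    rcases Nat.lt_or_ge a (b + 2) with h | h
    · have ha' : a ≤ b + 1 := by omega
      rw [Finset.sum_Icc_succ_top ha']
      calc lam a + m * (∑ j ∈ Finset.Icc a b, lam j ^ j + lam (b+1) ^ (b+1))
          = (lam a + m * ∑ j ∈ Finset.Icc a b, lam j ^ j) + m * lam (b+1) ^ (b+1) := by ring
        _ ≤ lam (b + 1) + m * lam (b+1) ^ (b+1) := by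
            have := ih (by omega) a ha'
            omega
        _ ≤ lam (b + 2) := hadapted (b+1) hb
    · have : a = b + 2 := by omega
      subst this
      rw [Finset.Icc_eq_empty (by omega)]
      simp

lemma cyclic_single (A : Finset (PNAction d)) (I : Finset (Fin d)) (c : Cfg d) :
    IsCyclicExec A I [c] := by
  constructor
  · exact ⟨[], by simp, ⟨c, rfl⟩⟩
  · intro c₀ cl h1 h2 i hi
    simp at h1 h2
    rw [← h1, ← h2]

lemma head?_append_cons (p : List (Cfg d)) (c : Cfg d) (w : List (Cfg d)) :
    (p ++ c :: w).head? = (p ++ [c]).head? := by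
  cases p <;> simp

lemma getLast?_append_cons (p : List (Cfg d)) (c : Cfg d) (w : List (Cfg d)) :
    (p ++ c :: w).getLast? = some (w.getLastD c) := by
  cases p with
  | nil => exact getLast?_cons_eq w c
  | cons h t =>
    rw [List.cons_append, getLast?_cons_eq, lastD_append]

lemma cons_head_shape {c : Cfg d} {e₀ : List (Cfg d)} {x : Cfg d} {w' w : List (Cfg d)}
    (h : e₀ ++ [x] ++ w' = c :: w) : ∃ t, e₀ ++ [x] = c :: t := by
  cases e₀ with
  | nil =>
    have : x = c := by simpa using congrArg (·.head?) h
    exact ⟨[], by simp [this]⟩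
  | cons g t =>
    have : g = c := by simpa using congrArg (·.head?) h
    exact ⟨t ++ [x], by rw [this]; rfl⟩

lemma obt_prepend {A : Finset (PNAction d)} {I : Finset (Fin d)} :
    ∀ {l : List (Cfg d)} {σ : List (PNAction d)}, ObtainedBy A I l σ →
    ∀ {c : Cfg d} {w : List (Cfg d)}, l = c :: w →
    ∀ {p : List (Cfg d)} {τ : List (PNAction d)},
    IsExec τ (p ++ [c]) → (∀ a ∈ τ, a ∈ A) →
    (∀ c₀', (p ++ [c]).head? = some c₀' → ∀ i ∈ I, c₀' i = c i) →
    ObtainedBy A I (p ++ l) σ := by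
  intro l σ hob
  cases hob with
  | nil e hcyc =>
    intro c w heq p τ hex hτ hagree
    subst heq
    apply ObtainedBy.nil
    obtain ⟨⟨τ', hτ', hex'⟩, hagr'⟩ := hcyc
    constructor
    · exact ⟨τ ++ τ', fun a ha => (List.mem_append.mp ha).elim (hτ a) (hτ' a),
        isExec_append hex hex'⟩
    · intro c₀ cl h1 h2 i hi
      rw [head?_append_cons] at h1
      rw [getLast?_append_cons] at h2
      have h3 := hagree c₀ h1 i hi
      have h4 := hagr' c (w.getLastD c) rfl (getLast?_cons_eq w c) i hi
      have h5 : w.getLastD c = cl := Option.some.inj h2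
      rw [h3, h4, h5]
  | cons e₀ x y e a σ' hcyc ha hstep hob' =>
    intro c w heq p τ hex hτ hagree
    obtain ⟨t, ht⟩ := cons_head_shape heq
    have hxt : t.getLastD c = x := by
      have h0 := congrArg List.getLast? ht
      rw [getLast?_append_cons e₀ x [], getLast?_cons_eq] at h0
      simpa using (Option.some.inj h0).symm
    have hcombined : IsCyclicExec A I ((p ++ e₀) ++ [x]) := by
      obtain ⟨⟨τ', hτ', hex'⟩, hagr'⟩ := hcyc
      constructor
      · refine ⟨τ ++ τ', fun a' ha' => (List.mem_append.mp ha').elim (hτ a') (hτ' a'), ?_⟩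
        have hx := isExec_append hex (ht ▸ hex' : IsExec τ' (c :: t))
        have hsh : p ++ c :: t = p ++ e₀ ++ [x] := by rw [← ht]; simp
        rw [← hsh]
        exact hx
      · intro c₀ cl h1 h2 i hi
        have h1' : (p ++ [c]).head? = some c₀ := by
          rw [List.append_assoc, ht] at h1
          exact (head?_append_cons p c t).symm.trans h1
        have h2' : cl = x := by
          rw [List.append_assoc, ht, getLast?_append_cons, hxt] at h2
          exact (Option.some.inj h2).symm
        have h3 := hagree c₀ h1' i hi
        have h4 := hagr' c x (by rw [ht]; rfl) (by rw [ht, getLast?_cons_eq, hxt]) i hi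
        rw [h3, h4, h2']
    have hres := ObtainedBy.cons (p ++ e₀) x y e a σ' hcombined ha hstep hob'
    have hshape : p ++ e₀ ++ [x] ++ y :: e = p ++ (e₀ ++ [x] ++ y :: e) := by simp
    rw [hshape] at hres
    exact hres

lemma obt_append {A : Finset (PNAction d)} {I : Finset (Fin d)} :
    ∀ {l : List (Cfg d)} {σ₁ : List (PNAction d)}, ObtainedBy A I l σ₁ →
    ∀ {q : List (Cfg d)} {x : Cfg d}, l = q ++ [x] →
    ∀ {a : PNAction d} {y : Cfg d} {e₂ : List (Cfg d)} {σ₂ : List (PNAction d)},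
    a ∈ A → Step a x y → ObtainedBy A I (y :: e₂) σ₂ →
    ObtainedBy A I (l ++ y :: e₂) (σ₁ ++ a :: σ₂) := by
  intro l σ₁ hob
  induction hob with
  | nil e hcyc =>
    intro q x heq a y e₂ σ₂ ha hstep hob₂
    subst heq
    exact ObtainedBy.cons q x y e₂ a σ₂ hcyc ha hstep hob₂
  | cons e₀ x' y' e a' σ' hcyc ha' hstep' hob' ih =>
    intro q x heq a y e₂ σ₂ ha hstep hob₂
    have hx : x = e.getLastD y' := by
      have h1 : (e₀ ++ [x'] ++ y' :: e).getLast? = some (e.getLastD y') := by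
        rw [List.append_assoc, List.singleton_append, getLast?_append_cons,
          getLastD_cons']
      rw [heq, getLast?_append_cons q x []] at h1
      simpa using Option.some.inj h1
    have hsplit : y' :: e = (y' :: e).dropLast ++ [x] := by
      rw [hx]; exact cons_eq_dropLast_append e y'
    have ihx := ih hsplit ha hstep hob₂
    have hres := ObtainedBy.cons e₀ x' y' (e ++ y :: e₂) a' (σ' ++ a :: σ₂) hcyc ha' hstep'
      (by rw [← List.cons_append]; exact ihx)
    have hshape : e₀ ++ [x'] ++ y' :: (e ++ y :: e₂) = (e₀ ++ [x'] ++ y' :: e) ++ y :: e₂ := by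
      simp
    rw [hshape] at hres
    exact hres

end Rackoff
namespace Rackoff
open Finset

variable {d : ℕ} {lam : ℕ → ℕ} {m : ℕ}

lemma phase (hm : 1 ≤ m)
    {A : Finset (PNAction d)} (hA : ∀ a ∈ A, ∀ i, a.1 i ≤ m)
    (J I : Finset (Fin d)) (hIJ : I ⊆ J) :
    ∀ N : ℕ, ∀ w : List (Cfg d), w.length ≤ N → ∀ c₀ : Cfg d, ∀ σ₀ : List (PNAction d),
    IsExec σ₀ (c₀ :: w) → (∀ a ∈ σ₀, a ∈ A) →
    ∃ σ : List (PNAction d),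
      ObtainedBy A I (c₀ :: w) σ ∧
      σ.length + 1 ≤ ((c₀ :: w).map (projF J)).toFinset.card ∧
      ∀ x : Cfg d, (∀ i ∈ J, x i = c₀ i) → (∀ i, i ∉ J → m * σ.length ≤ x i) →
      ∃ c : Cfg d, Fires σ x c ∧ (∀ i ∈ J, c i = w.getLastD c₀ i) ∧
        ∀ i, i ∉ J → (x i : ℤ) - (m : ℤ) * σ.length ≤ (c i : ℤ) := by
  intro N
  induction N with
  | zero =>
    intro w hw c₀ σ₀ hex hσ₀
    have hwnil : w = [] := List.length_eq_zero_iff.mp (Nat.le_zero.mp hw)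
    subst hwnil
    refine ⟨[], ObtainedBy.nil _ (cyclic_single A I c₀), by simp, ?_⟩
    intro x hxJ hxoff
    refine ⟨x, by simp [Fires], ?_, ?_⟩
    · intro i hi; simpa using hxJ i hi
    · intro i hi; simp
  | succ N ih =>
    intro w hw c₀ σ₀ hex hσ₀
    cases w with
    | nil =>
      refine ⟨[], ObtainedBy.nil _ (cyclic_single A I c₀), by simp, ?_⟩
      intro x hxJ hxoff
      refine ⟨x, by simp [Fires], ?_, ?_⟩
      · intro i hi; simpa using hxJ i hi
      · intro i hi; simp
    | cons c₁ w' =>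
      rcases split_exists (fun c => ∀ i ∈ J, c i = c₀ i) (c₁ :: w') with hnone | hsome
      · -- no later configuration agrees with c₀ on J
        cases σ₀ with
        | nil =>
          exfalso
          obtain ⟨c', hc'⟩ := hex
          have := congrArg List.length hc'
          simp at this
        | cons a τ =>
          obtain ⟨x₁, x₂, e', heq, hstep, hrest⟩ := hex
          have h1 : c₀ = x₁ := by simpa using congrArg (·.head?) heq
          have h2 : c₁ = x₂ := by
            have := congrArg List.tail heq
            simpa using congrArg (·.head?) this
          have h3 : w' = e' := by
            have := congrArg List.tail (congrArg List.tail heq)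
            simpa using this
          subst h1; subst h2; subst h3
          have haA : a ∈ A := hσ₀ a (by simp)
          obtain ⟨σ', hOB', hlen', htrans'⟩ := ih w' (by simpa using hw) c₁ τ hrest
            (fun a' ha' => hσ₀ a' (by simp [ha']))
          refine ⟨a :: σ', ?_, ?_, ?_⟩
          · have := ObtainedBy.cons [] c₀ c₁ w' a σ'
              (by simpa using cyclic_single A I c₀) haA hstep hOB'
            simpa using this
          · have hnotmem : projF J c₀ ∉ ((c₁ :: w').map (projF J)).toFinset := by
              intro hmem
              rw [List.mem_toFinset, List.mem_map] at hmem
              obtain ⟨c, hc, hpc⟩ := hmem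
              exact hnone c hc (projF_eq_iff.mp hpc)
            have hset : ((c₀ :: c₁ :: w').map (projF J)).toFinset
                = insert (projF J c₀) ((c₁ :: w').map (projF J)).toFinset := by
              simp
            rw [hset, Finset.card_insert_of_notMem hnotmem]
            simpa using hlen'
          · intro x hxJ hxoff
            have hlen : (a :: σ').length = σ'.length + 1 := by simp
            have hstepi := fun i => step_int a hstep i
            have hlex : ∀ i, a.1 i ≤ x i := by
              intro i
              by_cases hi : i ∈ J
              · rw [hxJ i hi]; exact (hstepi i).1
              · have h4 := hxoff i hi
                have h5 : m ≤ m * (a :: σ').length := by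
                  rw [hlen]
                  exact Nat.le_mul_of_pos_right m (by omega)
                exact le_trans (le_trans (hA a haA i) h5) h4
            have hsy := step_of_le a x hlex
            set y : Cfg d := fun i => a.2 i + (x i - a.1 i) with hy
            have hyJ : ∀ i ∈ J, y i = c₁ i := by
              intro i hi
              have hsi := hstepi i
              have hxi := hxJ i hi
              have hyi : y i = a.2 i + (x i - a.1 i) := rfl
              omega
            have hyoff : ∀ i, i ∉ J → m * σ'.length ≤ y i := by
              intro i hi
              have h4 := hxoff i hi
              have ha1 : a.1 i ≤ m := hA a haA i
              have hyi : y i = a.2 i + (x i - a.1 i) := rfl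
              rw [hlen] at h4
              have hxi : m * σ'.length + m ≤ x i := by
                calc m * σ'.length + m = m * (σ'.length + 1) := by ring
                  _ ≤ x i := h4
              omega
            obtain ⟨c, hfc, hclast, hcbd⟩ := htrans' y hyJ hyoff
            refine ⟨c, ⟨y, hsy, hfc⟩, ?_, ?_⟩
            · intro i hi
              rw [getLastD_cons']
              exact hclast i hi
            · intro i hi
              have hbd := hcbd i hi
              have hyi : (y i : ℤ) = (x i : ℤ) - a.1 i + a.2 i := (step_int a hsy i).2
              have ha1 : (a.1 i : ℤ) ≤ (m : ℤ) := by exact_mod_cast hA a haA i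
              have hlz : ((a :: σ').length : ℤ) = (σ'.length : ℤ) + 1 := by
                rw [hlen]; push_cast; ring
              have h0 : (0:ℤ) ≤ a.2 i := by positivity
              rw [hlz]
              linarith [hbd]
      · -- some later configuration agrees with c₀ on J
        obtain ⟨w₁, cu, w₂, heqw, hcu⟩ := hsome
        have hword : c₀ :: c₁ :: w' = (c₀ :: w₁) ++ cu :: w₂ := by
          rw [List.cons_append, heqw]
        rw [hword] at hex
        obtain ⟨q, x, τ₁, a, τ₂, hqx, hσeq, hexτ₁, hstepa, hexτ₂⟩ :=
          isExec_split (c₀ :: w₁) (by simp) hex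
        have hw₂ : w₂.length ≤ N := by
          have h6 := congrArg List.length heqw
          have hw' : w'.length + 1 ≤ N + 1 := by simpa using hw
          simp [List.length_append] at h6
          omega
        have hsubτ : ∀ a' ∈ τ₁ ++ [a], a' ∈ A := by
          intro a' ha'
          apply hσ₀ a'
          rw [hσeq]
          rcases List.mem_append.mp ha' with h | h
          · simp [h]
          · simp at h; simp [h]
        obtain ⟨σ', hOB', hlen', htrans'⟩ := ih w₂ hw₂ cu τ₂ hexτ₂
          (fun a' ha' => hσ₀ a' (by rw [hσeq]; simp [ha']))
        have haA : a ∈ A := hσ₀ a (by rw [hσeq]; simp)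
        refine ⟨σ', ?_, ?_, ?_⟩
        · have hexpiece : IsExec (τ₁ ++ [a]) ((c₀ :: w₁) ++ [cu]) := by
            have hexa : IsExec [a] (x :: [cu]) := ⟨x, cu, [], rfl, hstepa, ⟨cu, rfl⟩⟩
            have := isExec_append (hqx ▸ hexτ₁) hexa
            have hsh : q ++ x :: [cu] = (c₀ :: w₁) ++ [cu] := by rw [hqx]; simp
            rw [← hsh]
            exact this
          have hob := obt_prepend hOB' rfl hexpiece hsubτ
            (by intro c₀' hc₀' i hi
                have : c₀' = c₀ := by
                  have h7 : (c₀ :: (w₁ ++ [cu])).head? = some c₀' := by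
                    rw [← hc₀']; simp
                  simpa using h7.symm
                rw [this]
                exact (hcu i (hIJ hi)).symm)
          rw [hword]
          exact hob
        · refine le_trans hlen' (Finset.card_le_card ?_)
          intro p hp
          rw [List.mem_toFinset, List.mem_map] at hp ⊢
          obtain ⟨c, hc, hpc⟩ := hp
          exact ⟨c, by rw [hword]; exact List.mem_append_right _ hc, hpc⟩
        · intro x₀ hxJ hxoff
          have hxJ' : ∀ i ∈ J, x₀ i = cu i := by
            intro i hi
            rw [hxJ i hi, ← hcu i hi]
          obtain ⟨c, hfc, hclast, hcbd⟩ := htrans' x₀ hxJ' hxoff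
          refine ⟨c, hfc, ?_, hcbd⟩
          intro i hi
          have hlast : (c₁ :: w').getLastD c₀ = w₂.getLastD cu := by
            rw [heqw, lastD_append]
          rw [hlast]
          exact hclast i hi

end Rackoff
namespace Rackoff
open Finset

variable {d : ℕ} {lam : ℕ → ℕ} {m : ℕ}

lemma mainPure (hm : 1 ≤ m)
    (hpos : ∀ n ≤ d + 1, 0 < lam n)
    (hmono : ∀ i j : ℕ, i ≤ j → j ≤ d + 1 → lam i ≤ lam j)
    {A : Finset (PNAction d)} (hA : ∀ a ∈ A, ∀ i, a.1 i ≤ m)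
    (J₀ : Finset (Fin d)) (c₀ : Cfg d) (w : List (Cfg d)) (σ₀ : List (PNAction d))
    (hex : IsExec σ₀ (c₀ :: w)) (hσ₀ : ∀ a ∈ σ₀, a ∈ A)
    (hpure : ∀ c ∈ c₀ :: w, maxSmall lam J₀ {c} = J₀) :
    ∃ σ : List (PNAction d),
      ObtainedBy A (extractWord lam J₀ (c₀ :: w)) (c₀ :: w) σ ∧
      σ.length + 1 ≤ ∑ j ∈ Finset.Icc (extractWord lam J₀ (c₀ :: w)).card J₀.card, lam j ^ j ∧
      ∀ x : Cfg d, (∀ i ∈ J₀, x i = c₀ i) → (∀ i, i ∉ J₀ → m * σ.length ≤ x i) →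
      ∃ c : Cfg d, Fires σ x c ∧
        (∀ i ∈ extractWord lam J₀ (c₀ :: w), c i = w.getLastD c₀ i) ∧
        (∀ i, i ∉ J₀ → (x i : ℤ) - (m:ℤ) * σ.length ≤ (c i : ℤ)) ∧
        (∀ i ∈ J₀, i ∉ extractWord lam J₀ (c₀ :: w) →
          (lam ((extractWord lam J₀ (c₀ :: w)).card + 1) : ℤ) + m
            - (m:ℤ) * (lam (extractWord lam J₀ (c₀ :: w)).card : ℤ)
              ^ (extractWord lam J₀ (c₀ :: w)).card ≤ (c i : ℤ)) := by
  have hIeq : extractWord lam J₀ (c₀ :: w) = J₀ := by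
    rw [extractWord_cons, hpure c₀ (by simp)]
    exact extractWord_pure (fun c hc => hpure c (by simp [hc]))
  rw [hIeq]
  have hsm : ∀ c ∈ c₀ :: w, ∀ j ∈ J₀, c j < lam J₀.card := by
    intro c hc j hj
    have h := (smallSet_maxSmall hmono J₀ ({c} : Set (Cfg d))).2 c rfl j
      (by rw [hpure c hc]; exact hj)
    rwa [hpure c hc] at h
  obtain ⟨σ, hOB, hlen, htrans⟩ := phase hm hA J₀ J₀ (Finset.Subset.refl _)
    w.length w le_rfl c₀ σ₀ hex hσ₀
  refine ⟨σ, hOB, ?_, ?_⟩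
  · rw [Finset.Icc_self, Finset.sum_singleton]
    refine le_trans hlen (card_le_pow (hpos J₀.card (by have := card_le_d J₀; omega)) _ ?_)
    intro p hp
    rw [List.mem_toFinset, List.mem_map] at hp
    obtain ⟨c, hc, hpc⟩ := hp
    subst hpc
    constructor
    · intro i hi
      have := hsm c hc i hi
      simpa [projF, hi] using this
    · intro i hi
      simp [projF, hi]
  · intro x hxJ hxoff
    obtain ⟨c, hfc, hclast, hcbd⟩ := htrans x hxJ hxoff
    exact ⟨c, hfc, hclast, hcbd, fun i hi hni => absurd hi hni⟩

lemma main (hm : 1 ≤ m)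
    (hpos : ∀ n ≤ d + 1, 0 < lam n)
    (hmono : ∀ i j : ℕ, i ≤ j → j ≤ d + 1 → lam i ≤ lam j)
    (hadapted : ∀ n ≤ d, lam n + m * lam n ^ n ≤ lam (n + 1))
    {A : Finset (PNAction d)} (hA : ∀ a ∈ A, ∀ i, a.1 i ≤ m) :
    ∀ n : ℕ, ∀ J₀ : Finset (Fin d), J₀.card ≤ n →
    ∀ c₀ : Cfg d, ∀ w : List (Cfg d), ∀ σ₀ : List (PNAction d),
    IsExec σ₀ (c₀ :: w) → (∀ a ∈ σ₀, a ∈ A) →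
    maxSmall lam J₀ {c₀} = J₀ →
    ∃ σ : List (PNAction d),
      ObtainedBy A (extractWord lam J₀ (c₀ :: w)) (c₀ :: w) σ ∧
      σ.length + 1 ≤ ∑ j ∈ Finset.Icc (extractWord lam J₀ (c₀ :: w)).card J₀.card, lam j ^ j ∧
      ∀ x : Cfg d, (∀ i ∈ J₀, x i = c₀ i) → (∀ i, i ∉ J₀ → m * σ.length ≤ x i) →
      ∃ c : Cfg d, Fires σ x c ∧
        (∀ i ∈ extractWord lam J₀ (c₀ :: w), c i = w.getLastD c₀ i) ∧
        (∀ i, i ∉ J₀ → (x i : ℤ) - (m:ℤ) * σ.length ≤ (c i : ℤ)) ∧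
        (∀ i ∈ J₀, i ∉ extractWord lam J₀ (c₀ :: w) →
          (lam ((extractWord lam J₀ (c₀ :: w)).card + 1) : ℤ) + m
            - (m:ℤ) * (lam (extractWord lam J₀ (c₀ :: w)).card : ℤ)
              ^ (extractWord lam J₀ (c₀ :: w)).card ≤ (c i : ℤ)) := by
  intro n
  induction n with
  | zero =>
    intro J₀ hcard c₀ w σ₀ hex hσ₀ hidem
    have hJ₀ : J₀ = ∅ := Finset.card_eq_zero.mp (Nat.le_zero.mp hcard)
    subst hJ₀
    exact mainPure hm hpos hmono hA ∅ c₀ w σ₀ hex hσ₀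
      (fun c _ => Finset.subset_empty.mp (maxSmall_subset ∅ {c}))
  | succ n ihn =>
    intro J₀ hcard c₀ w σ₀ hex hσ₀ hidem
    rcases split_prop (fun c => maxSmall lam J₀ {c} = J₀) w with hpure | hsplit
    · exact mainPure hm hpos hmono hA J₀ c₀ w σ₀ hex hσ₀
        (fun c hc => (List.mem_cons.mp hc).elim (fun h => h ▸ hidem) (hpure c))
    · obtain ⟨w₁', c', w₂, heqw, hw₁pure, hcne⟩ := hsplit
      have hword : c₀ :: w = (c₀ :: w₁') ++ c' :: w₂ := by
        rw [List.cons_append, heqw]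
      rw [hword] at hex
      obtain ⟨q, x, τ₁, a, τ₂, hqx, hσeq, hexτ₁, hstepa, hexτ₂⟩ :=
        isExec_split (c₀ :: w₁') (by simp) hex
      have hJ'sub : maxSmall lam J₀ {c'} ⊆ J₀ := maxSmall_subset _ _
      have hssub : maxSmall lam J₀ {c'} ⊂ J₀ := ⟨hJ'sub, fun h =>
        hcne (Finset.Subset.antisymm hJ'sub h)⟩
      have hJ'card : (maxSmall lam J₀ {c'}).card ≤ n := by
        have := Finset.card_lt_card hssub
        omega
      have hidem' : maxSmall lam (maxSmall lam J₀ {c'}) {c'} = maxSmall lam J₀ {c'} :=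
        maxSmall_idem hmono J₀ {c'}
      obtain ⟨σ₂, hOB₂, hlen₂, htrans₂⟩ := ihn (maxSmall lam J₀ {c'}) hJ'card c' w₂ τ₂
        hexτ₂ (fun a' ha' => hσ₀ a' (by rw [hσeq]; simp [ha'])) hidem'
      have haA : a ∈ A := hσ₀ a (by rw [hσeq]; simp)
      set J' := maxSmall lam J₀ {c'} with hJ'def
      set I₂ := extractWord lam J' (c' :: w₂) with hI₂def
      have hII : extractWord lam J₀ (c₀ :: w) = I₂ := by
        rw [hword, extractWord_append, hI₂def]
        have h1 : extractWord lam J₀ (c₀ :: w₁') = J₀ := by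
          rw [extractWord_cons, hidem]
          exact extractWord_pure hw₁pure
        rw [h1, extractWord_cons, extractWord_cons, hidem']
      rw [hII]
      have hIsub : I₂ ⊆ J' := extractWord_subset (c' :: w₂) J'
      have hI₂card : I₂.card ≤ J'.card := Finset.card_le_card hIsub
      have hJ'd : J'.card ≤ d := card_le_d J'
      have hJ₀d : J₀.card ≤ d := card_le_d J₀
      -- the phase lemma on the first (pure) part
      obtain ⟨σ₁, hOB₁, hlen₁, htrans₁⟩ := phase hm hA J₀ I₂
        ((hIsub).trans hJ'sub) w₁'.length w₁' le_rfl c₀ τ₁ hexτ₁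
        (fun a' ha' => hσ₀ a' (by rw [hσeq]; simp [ha']))
      have hsm₁ : ∀ c ∈ c₀ :: w₁', ∀ j ∈ J₀, c j < lam J₀.card := by
        intro c hc j hj
        have hpc : maxSmall lam J₀ {c} = J₀ := by
          rcases List.mem_cons.mp hc with rfl | hc
          · exact hidem
          · exact hw₁pure c hc
        have h := (smallSet_maxSmall hmono J₀ ({c} : Set (Cfg d))).2 c rfl j
          (by rw [hpc]; exact hj)
        rwa [hpc] at h
      have hlen₁' : σ₁.length + 1 ≤ lam J₀.card ^ J₀.card := by
        refine le_trans hlen₁ (card_le_pow (hpos J₀.card (by omega)) _ ?_)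
        intro p hp
        rw [List.mem_toFinset, List.mem_map] at hp
        obtain ⟨c, hc, hpc⟩ := hp
        subst hpc
        constructor
        · intro i hi
          have := hsm₁ c hc i hi
          simpa [projF, hi] using this
        · intro i hi
          simp [projF, hi]
      refine ⟨σ₁ ++ a :: σ₂, ?_, ?_, ?_⟩
      · rw [hword]
        exact obt_append hOB₁ hqx haA hstepa hOB₂
      · have hL : (σ₁ ++ a :: σ₂).length = σ₁.length + σ₂.length + 1 := by simp; omega
        rw [hL]
        have hsum : lam J₀.card ^ J₀.card + ∑ j ∈ Finset.Icc I₂.card J'.card, lam j ^ j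
            ≤ ∑ j ∈ Finset.Icc I₂.card J₀.card, lam j ^ j := by
          have hnotmem : J₀.card ∉ Finset.Icc I₂.card J'.card := by
            rw [Finset.mem_Icc]
            have := Finset.card_lt_card hssub
            omega
          have hsubs : insert J₀.card (Finset.Icc I₂.card J'.card)
              ⊆ Finset.Icc I₂.card J₀.card := by
            intro j hj
            rcases Finset.mem_insert.mp hj with rfl | hj
            · rw [Finset.mem_Icc]
              have := Finset.card_lt_card hssub
              omega
            · rw [Finset.mem_Icc] at hj ⊢
              have := Finset.card_lt_card hssub
              omega
          calc lam J₀.card ^ J₀.card + ∑ j ∈ Finset.Icc I₂.card J'.card, lam j ^ j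
              = ∑ j ∈ insert J₀.card (Finset.Icc I₂.card J'.card), lam j ^ j :=
                (Finset.sum_insert (f := fun j => lam j ^ j) hnotmem).symm
            _ ≤ ∑ j ∈ Finset.Icc I₂.card J₀.card, lam j ^ j :=
                Finset.sum_le_sum_of_subset hsubs
        omega
      · intro x₀ hxJ₀ hxoff
        have hL : (σ₁ ++ a :: σ₂).length = σ₁.length + σ₂.length + 1 := by simp; omega
        rw [hL] at hxoff
        obtain ⟨c₁, hf₁, hc₁J, hc₁bd⟩ := htrans₁ x₀ hxJ₀ (by
          intro i hi
          refine le_trans ?_ (hxoff i hi)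
          exact Nat.mul_le_mul_left m (by omega))
        have hxval : w₁'.getLastD c₀ = x := by
          have h0 := congrArg List.getLast? hqx
          rw [getLast?_cons_eq, getLast?_append_cons q x []] at h0
          simpa using Option.some.inj h0
        have hc₁x : ∀ i ∈ J₀, c₁ i = x i := by
          intro i hi
          rw [hc₁J i hi, hxval]
        have hstepd := fun i => step_int a hstepa i
        have ha1m : ∀ i, a.1 i ≤ m := hA a haA
        have hlex : ∀ i, a.1 i ≤ c₁ i := by
          intro i
          by_cases hi : i ∈ J₀
          · rw [hc₁x i hi]; exact (hstepd i).1
          · have hbz := hc₁bd i hi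
            have hx0 : ((m * (σ₁.length + σ₂.length + 1) : ℕ) : ℤ) ≤ (x₀ i : ℤ) := by
              exact_mod_cast hxoff i hi
            have ham : ((a.1 i : ℕ) : ℤ) ≤ (m : ℤ) := by exact_mod_cast ha1m i
            have : ((a.1 i : ℕ) : ℤ) ≤ (c₁ i : ℤ) := by
              push_cast at hx0 ⊢
              nlinarith [hbz, hx0, ham, sq_nonneg ((m:ℤ)), mul_nonneg (by positivity : (0:ℤ) ≤ (m:ℤ)) (by positivity : (0:ℤ) ≤ (σ₂.length:ℤ))]
            exact_mod_cast this
        have hsy := step_of_le a c₁ hlex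
        set y : Cfg d := fun i => a.2 i + (c₁ i - a.1 i) with hydef
        have hyint : ∀ i, (y i : ℤ) = (c₁ i : ℤ) - a.1 i + a.2 i :=
          fun i => (step_int a hsy i).2
        have hyJ₀ : ∀ i ∈ J₀, y i = c' i := by
          intro i hi
          have h1 := hyint i
          have h2 := (hstepd i).2
          have h3 := hc₁x i hi
          have : (y i : ℤ) = (c' i : ℤ) := by rw [h1, h3]; omega
          exact_mod_cast this
        have hyoff' : ∀ i, i ∉ J' → m * σ₂.length ≤ y i := by
          intro i hi
          by_cases hiJ₀ : i ∈ J₀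
          · rw [hyJ₀ i hiJ₀]
            have hdrop : lam (J'.card + 1) ≤ c' i := drop_large hmono hiJ₀ hi
            have htel := telescope hadapted J'.card hJ'd I₂.card (by omega)
            have hmul : m * (σ₂.length + 1) ≤ m * ∑ j ∈ Finset.Icc I₂.card J'.card, lam j ^ j :=
              Nat.mul_le_mul_left m hlen₂
            calc m * σ₂.length ≤ m * (σ₂.length + 1) :=
                Nat.mul_le_mul_left m (Nat.le_succ _)
              _ ≤ m * ∑ j ∈ Finset.Icc I₂.card J'.card, lam j ^ j := hmul
              _ ≤ lam I₂.card + m * ∑ j ∈ Finset.Icc I₂.card J'.card, lam j ^ j :=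
                Nat.le_add_left _ _
              _ ≤ lam (J'.card + 1) := htel
              _ ≤ c' i := hdrop
          · have hbz := hc₁bd i hiJ₀
            have hx0 : ((m * (σ₁.length + σ₂.length + 1) : ℕ) : ℤ) ≤ (x₀ i : ℤ) := by
              exact_mod_cast hxoff i hiJ₀
            have ham : ((a.1 i : ℕ) : ℤ) ≤ (m : ℤ) := by exact_mod_cast ha1m i
            have hz : ((m * σ₂.length : ℕ) : ℤ) ≤ (y i : ℤ) := by
              rw [hyint i]
              push_cast at hx0 ⊢
              linarith [hbz]
            exact_mod_cast hz
        obtain ⟨c, hf₂, hcJ, hcbd₂, hcB₂⟩ := htrans₂ y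
          (fun i hi => hyJ₀ i (hJ'sub hi)) hyoff'
        refine ⟨c, fires_append hf₁ ⟨y, hsy, hf₂⟩, ?_, ?_, ?_⟩
        · intro i hi
          have hlast : w.getLastD c₀ = w₂.getLastD c' := by
            rw [heqw, lastD_append]
          rw [hlast]
          exact hcJ i hi
        · intro i hi
          have hiJ' : i ∉ J' := fun hmem => hi (hJ'sub hmem)
          have hbz := hc₁bd i hi
          have hbz2 := hcbd₂ i hiJ'
          have ham : ((a.1 i : ℕ) : ℤ) ≤ (m : ℤ) := by exact_mod_cast ha1m i
          have hyi := hyint i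
          rw [hL]
          push_cast
          push_cast at hbz hbz2 hyi
          linarith
        · intro i hiJ₀ hiI₂
          by_cases hiJ' : i ∈ J'
          · exact hcB₂ i hiJ' hiI₂
          · have hbz2 := hcbd₂ i hiJ'
            have hyc' : y i = c' i := hyJ₀ i hiJ₀
            have hdrop : lam (J'.card + 1) ≤ c' i := drop_large hmono hiJ₀ hiJ'
            have ht1 := telescope hadapted J'.card hJ'd (I₂.card + 1) (by omega)
            have ht2 : ∑ j ∈ Finset.Icc I₂.card J'.card, lam j ^ j
                = lam I₂.card ^ I₂.card + ∑ j ∈ Finset.Icc (I₂.card + 1) J'.card, lam j ^ j :=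
              sum_Icc_bot hI₂card
            have ht3 := hlen₂
            -- cast everything to ℤ
            have ht1z : (lam (I₂.card + 1) : ℤ)
                + (m:ℤ) * ∑ j ∈ Finset.Icc (I₂.card + 1) J'.card, (lam j : ℤ) ^ j
                ≤ (lam (J'.card + 1) : ℤ) := by exact_mod_cast ht1
            have ht2z : (∑ j ∈ Finset.Icc I₂.card J'.card, (lam j : ℤ) ^ j)
                = (lam I₂.card : ℤ) ^ I₂.card
                  + ∑ j ∈ Finset.Icc (I₂.card + 1) J'.card, (lam j : ℤ) ^ j := by
              exact_mod_cast ht2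
            have ht3z : ((σ₂.length : ℤ) + 1)
                ≤ ∑ j ∈ Finset.Icc I₂.card J'.card, (lam j : ℤ) ^ j := by exact_mod_cast ht3
            have hdropz : (lam (J'.card + 1) : ℤ) ≤ (c' i : ℤ) := by exact_mod_cast hdrop
            have hyz : (y i : ℤ) = (c' i : ℤ) := Nat.cast_inj.mpr hyc'
            have hmz : (0:ℤ) ≤ (m:ℤ) := by positivity
            have hσ₂z : (0:ℤ) ≤ (σ₂.length : ℤ) := by positivity
            have hmul2 : (m:ℤ) * ((σ₂.length : ℤ) + 1)
                ≤ (m:ℤ) * ∑ j ∈ Finset.Icc I₂.card J'.card, (lam j : ℤ) ^ j :=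
              mul_le_mul_of_nonneg_left ht3z hmz
            rw [mul_add, mul_one] at hmul2
            have ht2m : (m:ℤ) * (∑ j ∈ Finset.Icc I₂.card J'.card, (lam j : ℤ) ^ j)
                = (m:ℤ) * ((lam I₂.card : ℤ) ^ I₂.card)
                  + (m:ℤ) * ∑ j ∈ Finset.Icc (I₂.card + 1) J'.card, (lam j : ℤ) ^ j := by
              rw [ht2z, mul_add]
            push_cast at hbz2
            linarith [hbz2, ht1z, ht2m, hmul2, hdropz, hyz]

end Rackoff

/-- (Rackoff extraction.) Let `λ` be an `m`-adapted extractor,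
`A ⊆ {0,…,m}^d × ℕ^d`, and `e = c₀c₁…c_k` an execution of `A`; let
`I := extract_{λ,{1,…,d}}(e)`. Then some word `σ`, obtained from `e` by removing
`I`-cycles, with `|σ| ≤ d·λ_d^d`, satisfies `c₀ →_σ c` for a configuration `c`
with `c(i) = c_k(i)` for `i ∈ I` and
`c(i) ≥ λ_{|I|+1} − m·Σ_{j=1}^{|I|} λ_j^j` for `i ∉ I`. -/
theorem rackoff_extraction {d : ℕ} (m : ℕ) (hm : 1 ≤ m) (lam : ℕ → ℕ)
    (hpos : ∀ n ≤ d + 1, 0 < lam n)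
    (hmono : ∀ i j : ℕ, i ≤ j → j ≤ d + 1 → lam i ≤ lam j)
    (hadapted : ∀ n ≤ d, lam n + m * (lam n) ^ n ≤ lam (n + 1))
    (A : Finset (PNAction d)) (hA : ∀ a ∈ A, ∀ i, a.1 i ≤ m)
    (σ₀ : List (PNAction d)) (hσ₀ : ∀ a ∈ σ₀, a ∈ A)
    (c₀ : Cfg d) (e : List (Cfg d)) (hexec : IsExec σ₀ (c₀ :: e)) :
    ∃ (σ : List (PNAction d)) (c : Cfg d),
      ObtainedBy A (extractWord lam Finset.univ (c₀ :: e)) (c₀ :: e) σ ∧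
      σ.length ≤ d * (lam d) ^ d ∧
      Fires σ c₀ c ∧
      (∀ i ∈ extractWord lam Finset.univ (c₀ :: e),
        c i = (c₀ :: e).getLast (List.cons_ne_nil _ _) i) ∧
      (∀ i : Fin d, i ∉ extractWord lam Finset.univ (c₀ :: e) →
        (lam ((extractWord lam Finset.univ (c₀ :: e)).card + 1) : ℤ) -
            (m : ℤ) * ∑ j ∈ Finset.Icc 1 (extractWord lam Finset.univ (c₀ :: e)).card,
              ((lam j : ℤ)) ^ j ≤ (c i : ℤ)) := by
  classical
  open Rackoff in
  have hidem : maxSmall lam (maxSmall lam Finset.univ {c₀}) {c₀}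
      = maxSmall lam Finset.univ {c₀} := Rackoff.maxSmall_idem hmono _ _
  obtain ⟨σ, hOB, hlen, htrans⟩ := Rackoff.main hm hpos hmono hadapted hA
    (maxSmall lam Finset.univ {c₀}).card (maxSmall lam Finset.univ {c₀}) le_rfl
    c₀ e σ₀ hexec hσ₀ hidem
  have hIeq : extractWord lam (maxSmall lam Finset.univ {c₀}) (c₀ :: e)
      = extractWord lam Finset.univ (c₀ :: e) := by
    rw [Rackoff.extractWord_cons, Rackoff.extractWord_cons, hidem]
  rw [hIeq] at hOB hlen htrans
  have hIsub : extractWord lam Finset.univ (c₀ :: e) ⊆ maxSmall lam Finset.univ {c₀} := by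
    rw [← hIeq]
    exact Rackoff.extractWord_subset _ _
  have hIcard : (extractWord lam Finset.univ (c₀ :: e)).card
      ≤ (maxSmall lam Finset.univ {c₀}).card := Finset.card_le_card hIsub
  have hJ₀d : (maxSmall lam Finset.univ {c₀}).card ≤ d := Rackoff.card_le_d _
  have hIc : (extractWord lam Finset.univ (c₀ :: e)).card ≤ d := le_trans hIcard hJ₀d
  have htel := Rackoff.telescope hadapted (maxSmall lam Finset.univ {c₀}).card hJ₀d
    (extractWord lam Finset.univ (c₀ :: e)).card (by omega)
  have hx2 : ∀ i, i ∉ maxSmall lam Finset.univ {c₀} → m * σ.length ≤ c₀ i := by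
    intro i hi
    have hdrop : lam ((maxSmall lam Finset.univ {c₀}).card + 1) ≤ c₀ i :=
      Rackoff.drop_large hmono (Finset.mem_univ i) hi
    have hmul : m * (σ.length + 1) ≤ m * ∑ j ∈ Finset.Icc
        (extractWord lam Finset.univ (c₀ :: e)).card
        (maxSmall lam Finset.univ {c₀}).card, lam j ^ j :=
      Nat.mul_le_mul_left m hlen
    calc m * σ.length ≤ m * (σ.length + 1) := Nat.mul_le_mul_left m (Nat.le_succ _)
      _ ≤ m * ∑ j ∈ Finset.Icc (extractWord lam Finset.univ (c₀ :: e)).card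
            (maxSmall lam Finset.univ {c₀}).card, lam j ^ j := hmul
      _ ≤ lam (extractWord lam Finset.univ (c₀ :: e)).card
            + m * ∑ j ∈ Finset.Icc (extractWord lam Finset.univ (c₀ :: e)).card
            (maxSmall lam Finset.univ {c₀}).card, lam j ^ j := Nat.le_add_left _ _
      _ ≤ lam ((maxSmall lam Finset.univ {c₀}).card + 1) := htel
      _ ≤ c₀ i := hdrop
  obtain ⟨c, hf, hcI, hcbdA, hcbdB⟩ := htrans c₀ (fun i _ => rfl) hx2
  -- abbreviations
  have hlamle : lam (extractWord lam Finset.univ (c₀ :: e)).card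
        ^ (extractWord lam Finset.univ (c₀ :: e)).card
      ≤ (∑ j ∈ Finset.Icc 1 (extractWord lam Finset.univ (c₀ :: e)).card, lam j ^ j) + 1 := by
    rcases Nat.eq_zero_or_pos (extractWord lam Finset.univ (c₀ :: e)).card with h0 | h0
    · rw [h0]; simp
    · have := Finset.single_le_sum (f := fun j => lam j ^ j)
        (fun j _ => Nat.zero_le _)
        (Finset.mem_Icc.mpr ⟨h0, le_refl _⟩)
      exact le_trans this (Nat.le_succ _)
  refine ⟨σ, c, hOB, ?_, hf, ?_, ?_⟩
  · -- length bound
    have h1 : ∑ j ∈ Finset.Icc (extractWord lam Finset.univ (c₀ :: e)).card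
          (maxSmall lam Finset.univ {c₀}).card, lam j ^ j
        ≤ ∑ j ∈ Finset.Icc 0 d, lam j ^ j :=
      Finset.sum_le_sum_of_subset (Finset.Icc_subset_Icc (Nat.zero_le _) hJ₀d)
    have h2 : ∑ j ∈ Finset.Icc 0 d, lam j ^ j
        = 1 + ∑ j ∈ Finset.Icc 1 d, lam j ^ j := by
      rw [Rackoff.sum_Icc_bot (Nat.zero_le d)]
      simp
    have h3 : ∑ j ∈ Finset.Icc 1 d, lam j ^ j ≤ d * lam d ^ d := by
      have hb : ∀ j ∈ Finset.Icc 1 d, lam j ^ j ≤ lam d ^ d := by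
        intro j hj
        rw [Finset.mem_Icc] at hj
        calc lam j ^ j ≤ lam d ^ j := Nat.pow_le_pow_left (hmono j d hj.2 (by omega)) j
          _ ≤ lam d ^ d := Nat.pow_le_pow_right (hpos d (by omega)) hj.2
      calc ∑ j ∈ Finset.Icc 1 d, lam j ^ j
          ≤ (Finset.Icc 1 d).card * (lam d ^ d) := by
            simpa using Finset.sum_le_card_nsmul _ _ _ hb
        _ = d * lam d ^ d := by rw [Nat.card_Icc]; simp
    omega
  · -- agreement on I
    intro i hi
    rw [Rackoff.getLast_cons_eq]
    exact hcI i hi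
  · -- lower bound off I
    intro i hi
    have hmulz : (m:ℤ) * ((lam (extractWord lam Finset.univ (c₀ :: e)).card : ℤ)
          ^ (extractWord lam Finset.univ (c₀ :: e)).card)
        ≤ (m:ℤ) * (∑ j ∈ Finset.Icc 1 (extractWord lam Finset.univ (c₀ :: e)).card,
            (lam j : ℤ) ^ j) + m := by
      have hz : ((lam (extractWord lam Finset.univ (c₀ :: e)).card
            ^ (extractWord lam Finset.univ (c₀ :: e)).card : ℕ) : ℤ)
          ≤ ((∑ j ∈ Finset.Icc 1 (extractWord lam Finset.univ (c₀ :: e)).card, lam j ^ j)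
            + 1 : ℕ) := by exact_mod_cast hlamle
      push_cast at hz
      have := mul_le_mul_of_nonneg_left hz (by positivity : (0:ℤ) ≤ (m:ℤ))
      rw [mul_add, mul_one] at this
      exact this
    by_cases hiJ₀ : i ∈ maxSmall lam Finset.univ {c₀}
    · have hb := hcbdB i hiJ₀ hi
      linarith [hb, hmulz]
    · have hb := hcbdA i hiJ₀
      have hdropz : ((lam ((maxSmall lam Finset.univ {c₀}).card + 1) : ℕ) : ℤ)
          ≤ (c₀ i : ℤ) := by
        exact_mod_cast Rackoff.drop_large hmono (Finset.mem_univ i) hiJ₀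
      have htel2 := Rackoff.telescope hadapted (maxSmall lam Finset.univ {c₀}).card hJ₀d
        ((extractWord lam Finset.univ (c₀ :: e)).card + 1) (by omega)
      have htel2z : (lam ((extractWord lam Finset.univ (c₀ :: e)).card + 1) : ℤ)
          + (m:ℤ) * ∑ j ∈ Finset.Icc ((extractWord lam Finset.univ (c₀ :: e)).card + 1)
            (maxSmall lam Finset.univ {c₀}).card, (lam j : ℤ) ^ j
          ≤ (lam ((maxSmall lam Finset.univ {c₀}).card + 1) : ℤ) := by
        exact_mod_cast htel2
      have hsplit := Rackoff.sum_Icc_bot (f := fun j => lam j ^ j) hIcard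
      have hsplitz : (∑ j ∈ Finset.Icc (extractWord lam Finset.univ (c₀ :: e)).card
            (maxSmall lam Finset.univ {c₀}).card, (lam j : ℤ) ^ j)
          = (lam (extractWord lam Finset.univ (c₀ :: e)).card : ℤ)
              ^ (extractWord lam Finset.univ (c₀ :: e)).card
            + ∑ j ∈ Finset.Icc ((extractWord lam Finset.univ (c₀ :: e)).card + 1)
              (maxSmall lam Finset.univ {c₀}).card, (lam j : ℤ) ^ j := by
        exact_mod_cast hsplit
      have hlenz : ((σ.length : ℤ) + 1)
          ≤ ∑ j ∈ Finset.Icc (extractWord lam Finset.univ (c₀ :: e)).card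
            (maxSmall lam Finset.univ {c₀}).card, (lam j : ℤ) ^ j := by
        exact_mod_cast hlen
      have hmul3 : (m:ℤ) * ((σ.length : ℤ) + 1)
          ≤ (m:ℤ) * ∑ j ∈ Finset.Icc (extractWord lam Finset.univ (c₀ :: e)).card
            (maxSmall lam Finset.univ {c₀}).card, (lam j : ℤ) ^ j :=
        mul_le_mul_of_nonneg_left hlenz (by positivity)
      rw [mul_add, mul_one] at hmul3
      have hsplitm : (m:ℤ) * (∑ j ∈ Finset.Icc (extractWord lam Finset.univ (c₀ :: e)).card
            (maxSmall lam Finset.univ {c₀}).card, (lam j : ℤ) ^ j)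
          = (m:ℤ) * ((lam (extractWord lam Finset.univ (c₀ :: e)).card : ℤ)
              ^ (extractWord lam Finset.univ (c₀ :: e)).card)
            + (m:ℤ) * ∑ j ∈ Finset.Icc ((extractWord lam Finset.univ (c₀ :: e)).card + 1)
              (maxSmall lam Finset.univ {c₀}).card, (lam j : ℤ) ^ j := by
        rw [hsplitz, mul_add]
      linarith [hb, hdropz, htel2z, hmul3, hsplitm, hmulz]
end
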